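/- arXiv:2105.08578 — 6 statements merged into one kernel-verified Lean document; each statement's English description precedes it below -/
import Mathlib

section
/- Let A ⊆ ℝⁿ be a Borel set, ε ∈ (0,1), let f : A → ℝᵏ be a Lipschitz map, and let Φ : f(A) → ℝˡ be a (1±ε)-bi-Lipschitz embedding. Let F : ℝⁿ → ℝᵏ and G : ℝⁿ → ℝˡ be any Lipschitz maps with F|_A = f and G|_A = Φ ∘ f. Then for ℒⁿ-a.e. x ∈ A and every v ∈ ℝⁿ, (1−ε)² ‖DF(x) v‖² ≤ ‖DG(x) v‖² ≤ (1+ε)² ‖DF(x) v‖². -/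
open Metric Set MeasureTheory Filter Topology
open scoped NNReal Pointwise

/-!
At a Lebesgue density point `x` of `A` every direction `v` is tangent to `A`: there are points
`x + d` of `A` with `d → 0` and `c • d → v`. Multiplying the two-sided bi-Lipschitz bound
`(1 - ε) ‖F y - F x‖ ≤ ‖G y - G x‖ ≤ (1 + ε) ‖F y - F x‖` at `y = x + d` by `‖c‖` and
letting `d → 0` turns it into the same bound between `DF(x) v` and `DG(x) v`. Almost every point
of `A` is a density point at which both `F` and `G` are differentiable (Besicovitch, Rademacher).
-/

theorem tangentConeAt_eq_univ_of_tendsto_density {E : Type*} [NormedAddCommGroup E]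
    [NormedSpace ℝ E] [MeasurableSpace E] [BorelSpace E] [FiniteDimensional ℝ E]
    (μ : Measure E) [μ.IsAddHaarMeasure] {s : Set E} {x : E}
    (hx : Tendsto (fun r => μ (s ∩ closedBall x r) / μ (closedBall x r)) (𝓝[>] 0) (𝓝 1)) :
    tangentConeAt ℝ s x = univ := by
  refine eq_univ_of_forall fun v => ?_
  -- Index by pairs `(r, a)` with `r → 0⁺` and `a → v`, taking `d = r • a` and `c = r⁻¹`.
  refine mem_tangentConeAt_of_frequently (𝓝[>] (0 : ℝ) ×ˢ 𝓝 v) (fun p => p.1⁻¹)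
    (fun p => p.1 • p.2) ?_ ?_ ?_
  · have hd : Tendsto (fun p : ℝ × E => p.1 • p.2) (𝓝 (0, v)) (𝓝 0) := by
      simpa using continuous_smul.tendsto ((0 : ℝ), v)
    exact hd.mono_left (by rw [nhds_prod_eq]; exact prod_mono nhdsWithin_le_nhds le_rfl)
  · rw [frequently_iff]
    intro U hU
    obtain ⟨S, hS, T, hT, hST⟩ := mem_prod_iff.1 hU
    obtain ⟨η, hη, hηT⟩ := Metric.mem_nhds_iff.1 hT
    have hmeets : ∀ᶠ r in 𝓝[>] (0 : ℝ), (s ∩ ({x} + r • closedBall v (η / 2))).Nonempty :=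
      Measure.eventually_nonempty_inter_smul_of_density_one μ s x hx _ measurableSet_closedBall
        (measure_closedBall_pos μ v (half_pos hη)).ne'
    obtain ⟨r, ⟨y, hys, hy⟩, hrS⟩ := (hmeets.and hS).exists
    obtain ⟨a, ha, rfl⟩ : ∃ a ∈ closedBall v (η / 2), y = x + r • a := by
      simp only [singleton_add, image_add_left, mem_preimage, mem_smul_set] at hy
      obtain ⟨a, ha, hra⟩ := hy
      exact ⟨a, ha, by rw [hra]; abel⟩
    exact ⟨(r, a), hST ⟨hrS, hηT (closedBall_subset_ball (half_lt_self hη) ha)⟩, hys⟩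
  · refine tendsto_snd.congr' ?_
    filter_upwards [prod_mem_prod self_mem_nhdsWithin univ_mem] with p hp
    exact (inv_smul_smul₀ (ne_of_gt hp.1) p.2).symm

theorem mul_norm_fderiv_le_of_forall_mem {𝕜 E F G : Type*} [NontriviallyNormedField 𝕜]
    [NormedAddCommGroup E] [NormedSpace 𝕜 E] [NormedAddCommGroup F] [NormedSpace 𝕜 F]
    [NormedAddCommGroup G] [NormedSpace 𝕜 G] {f : E → F} {g : E → G} {f' : E →L[𝕜] F}
    {g' : E →L[𝕜] G} {s : Set E} {x v : E} (hv : v ∈ tangentConeAt 𝕜 s x)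
    (hf : HasFDerivWithinAt f f' s x) (hg : HasFDerivWithinAt g g' s x) {a b : ℝ}
    (h : ∀ y ∈ s, a * ‖f y - f x‖ ≤ b * ‖g y - g x‖) :
    a * ‖f' v‖ ≤ b * ‖g' v‖ := by
  obtain ⟨α, l, hl, c, d, hd, hds, hcd⟩ := exists_fun_of_mem_tangentConeAt hv
  refine le_of_tendsto_of_tendsto ((hf.lim hd hds hcd).norm.const_mul a)
    ((hg.lim hd hds hcd).norm.const_mul b) ?_
  filter_upwards [hds] with n hn
  simp only [norm_smul]
  linarith [mul_le_mul_of_nonneg_left (h _ hn) (norm_nonneg (c n))]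

theorem mul_norm_fderiv_le_of_tendsto_density {E F G : Type*} [NormedAddCommGroup E]
    [NormedSpace ℝ E] [MeasurableSpace E] [BorelSpace E] [FiniteDimensional ℝ E]
    [NormedAddCommGroup F] [NormedSpace ℝ F] [NormedAddCommGroup G] [NormedSpace ℝ G]
    (μ : Measure E) [μ.IsAddHaarMeasure] {f : E → F} {g : E → G} {s : Set E} {x : E}
    (hx : Tendsto (fun r => μ (s ∩ closedBall x r) / μ (closedBall x r)) (𝓝[>] 0) (𝓝 1))
    (hf : DifferentiableAt ℝ f x) (hg : DifferentiableAt ℝ g x) {a b : ℝ}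
    (h : ∀ y ∈ s, ∀ z ∈ s, a * ‖f y - f z‖ ≤ b * ‖g y - g z‖) (v : E) :
    a * ‖fderiv ℝ f x v‖ ≤ b * ‖fderiv ℝ g x v‖ := by
  have hv : v ∈ tangentConeAt ℝ s x := by
    rw [tangentConeAt_eq_univ_of_tendsto_density μ hx]; exact mem_univ v
  have hxs : x ∈ closure s := mem_closure_of_nonempty_tangentConeAt ⟨v, hv⟩
  refine mul_norm_fderiv_le_of_forall_mem hv hf.hasFDerivAt.hasFDerivWithinAt
    hg.hasFDerivAt.hasFDerivWithinAt fun y hy => ?_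
  -- `x` itself need not lie in `s`; it is reached as a limit of points of `s`.
  have hfx := hf.continuousAt
  have hgx := hg.continuousAt
  exact ContinuousWithinAt.closure_le hxs (by fun_prop) (by fun_prop) (h y hy)

theorem stmt4_general (n k l : ℕ) (A : Set (EuclideanSpace ℝ (Fin n)))
    (ε : ℝ) (hε : ε ∈ Set.Ioo (0:ℝ) 1)
    (f : EuclideanSpace ℝ (Fin n) → EuclideanSpace ℝ (Fin k))
    (Φ : EuclideanSpace ℝ (Fin k) → EuclideanSpace ℝ (Fin l))
    (hΦ : ∀ y ∈ f '' A, ∀ z ∈ f '' A,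
      (1 - ε) * dist y z ≤ dist (Φ y) (Φ z) ∧ dist (Φ y) (Φ z) ≤ (1 + ε) * dist y z)
    (F : EuclideanSpace ℝ (Fin n) → EuclideanSpace ℝ (Fin k))
    (hF : ∃ K : ℝ≥0, LipschitzWith K F) (hFA : ∀ x ∈ A, F x = f x)
    (G : EuclideanSpace ℝ (Fin n) → EuclideanSpace ℝ (Fin l))
    (hG : ∃ K : ℝ≥0, LipschitzWith K G) (hGA : ∀ x ∈ A, G x = Φ (f x)) :
    ∀ᵐ x ∂(volume.restrict A), ∀ v : EuclideanSpace ℝ (Fin n),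
      (1 - ε) ^ 2 * ‖fderiv ℝ F x v‖ ^ 2 ≤ ‖fderiv ℝ G x v‖ ^ 2 ∧
      ‖fderiv ℝ G x v‖ ^ 2 ≤ (1 + ε) ^ 2 * ‖fderiv ℝ F x v‖ ^ 2 := by
  obtain ⟨KF, hKF⟩ := hF
  obtain ⟨KG, hKG⟩ := hG
  have hbilip : ∀ y ∈ A, ∀ z ∈ A, (1 - ε) * ‖F y - F z‖ ≤ ‖G y - G z‖ ∧
      ‖G y - G z‖ ≤ (1 + ε) * ‖F y - F z‖ := by
    intro y hy z hz
    simpa only [hFA y hy, hFA z hz, hGA y hy, hGA z hz, dist_eq_norm]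
      using hΦ _ (mem_image_of_mem f hy) _ (mem_image_of_mem f hz)
  filter_upwards [Besicovitch.ae_tendsto_measure_inter_div volume A,
    ae_restrict_of_ae hKF.ae_differentiableAt, ae_restrict_of_ae hKG.ae_differentiableAt]
    with x hx hFx hGx v
  have hlow := mul_norm_fderiv_le_of_tendsto_density volume hx hFx hGx (a := 1 - ε) (b := 1)
    (fun y hy z hz => by rw [one_mul]; exact (hbilip y hy z hz).1) v
  have hup := mul_norm_fderiv_le_of_tendsto_density volume hx hGx hFx (a := 1) (b := 1 + ε)
    (fun y hy z hz => by rw [one_mul]; exact (hbilip y hy z hz).2) v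
  rw [one_mul] at hlow hup
  have hε1 : 0 ≤ 1 - ε := by linarith [hε.2]
  constructor
  · rw [← mul_pow]
    exact pow_le_pow_left₀ (mul_nonneg hε1 (norm_nonneg _)) hlow 2
  · rw [← mul_pow]
    exact pow_le_pow_left₀ (norm_nonneg _) hup 2

/-- Let `A ⊆ ℝⁿ` be Borel, `ε ∈ (0,1)`, `f : A → ℝᵏ` Lipschitz, and `Φ : f(A) → ℝˡ` a
`(1±ε)`-bi-Lipschitz embedding. If `F : ℝⁿ → ℝᵏ` and `G : ℝⁿ → ℝˡ` are Lipschitz maps with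
`F|_A = f` and `G|_A = Φ ∘ f`, then for `ℒⁿ`-a.e. `x ∈ A` and every `v ∈ ℝⁿ`,
`(1−ε)² ‖DF(x) v‖² ≤ ‖DG(x) v‖² ≤ (1+ε)² ‖DF(x) v‖²`. -/
theorem stmt4 (n k l : ℕ) (A : Set (EuclideanSpace ℝ (Fin n))) (hA : MeasurableSet A)
    (ε : ℝ) (hε : ε ∈ Set.Ioo (0:ℝ) 1)
    (f : EuclideanSpace ℝ (Fin n) → EuclideanSpace ℝ (Fin k))
    (hf : ∃ K : ℝ≥0, LipschitzOnWith K f A)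
    (Φ : EuclideanSpace ℝ (Fin k) → EuclideanSpace ℝ (Fin l))
    (hΦ : ∀ y ∈ f '' A, ∀ z ∈ f '' A,
      (1 - ε) * dist y z ≤ dist (Φ y) (Φ z) ∧ dist (Φ y) (Φ z) ≤ (1 + ε) * dist y z)
    (F : EuclideanSpace ℝ (Fin n) → EuclideanSpace ℝ (Fin k))
    (hF : ∃ K : ℝ≥0, LipschitzWith K F) (hFA : ∀ x ∈ A, F x = f x)
    (G : EuclideanSpace ℝ (Fin n) → EuclideanSpace ℝ (Fin l))
    (hG : ∃ K : ℝ≥0, LipschitzWith K G) (hGA : ∀ x ∈ A, G x = Φ (f x)) :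
    ∀ᵐ x ∂(volume.restrict A), ∀ v : EuclideanSpace ℝ (Fin n),
      (1 - ε) ^ 2 * ‖fderiv ℝ F x v‖ ^ 2 ≤ ‖fderiv ℝ G x v‖ ^ 2 ∧
      ‖fderiv ℝ G x v‖ ^ 2 ≤ (1 + ε) ^ 2 * ‖fderiv ℝ F x v‖ ^ 2 :=
  stmt4_general n k l A ε hε f Φ hΦ F hF hFA G hG hGA
end

section
/- Let A ⊆ ℝⁿ be a Borel set, ε ∈ (0,1), let f : A → ℝᵏ be a (1±ε)-bi-Lipschitz embedding, and let F : ℝⁿ → ℝᵏ be any Lipschitz map with F|_A = f. Then there is a constant C > 0 depending only on n such that for ℒⁿ-a.e. x ∈ A and all v, w ∈ ℝⁿ, |⟨DF(x) v, DF(x) w⟩ − ⟨v, w⟩| ≤ C ε ‖v‖ ‖w‖. -/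
/-!
At a point `x` of `A` where `F` is differentiable and `A` has Lebesgue density one (almost every
point of `A`), every direction is a tangent direction of `A`, so along a suitable sequence of
points of `A` the difference quotients of `F` converge to `DF(x) v`. The bi-Lipschitz bounds pass
to the limit: `(1 - ε)‖v‖ ≤ ‖DF(x) v‖ ≤ (1 + ε)‖v‖`. Hence the self-adjoint operator
`DF(x)* DF(x) - 1` has quadratic form bounded by `3ε‖v‖²`, so its norm is at most `3ε`, which
bounds `⟨DF(x) v, DF(x) w⟩ - ⟨v, w⟩ = ⟨(DF(x)* DF(x) - 1) v, w⟩`.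
-/

open Metric Set MeasureTheory Filter
open scoped NNReal Topology

theorem tangentConeAt_eq_univ_of_density_one {E : Type*} [NormedAddCommGroup E]
    [NormedSpace ℝ E] [MeasurableSpace E] [BorelSpace E] [FiniteDimensional ℝ E]
    (μ : Measure E) [μ.IsAddHaarMeasure] {s : Set E} {x : E}
    (h : Tendsto (fun r => μ (s ∩ closedBall x r) / μ (closedBall x r)) (𝓝[>] 0) (𝓝 1)) :
    tangentConeAt ℝ s x = univ := by
  refine eq_univ_of_forall fun y => ?_
  rw [tangentConeAt_eq_biInter_closure]
  refine mem_iInter₂.2 fun U hU => Metric.mem_closure_iff.2 fun δ hδ => ?_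
  obtain ⟨ρ, hρ, hρU⟩ := Metric.mem_nhds_iff.1 hU
  have hsmall : ∀ᶠ r in 𝓝[>] (0 : ℝ), r * (‖y‖ + δ) < ρ :=
    (((continuous_id.mul continuous_const).tendsto' 0 0 (zero_mul _)).mono_left
      nhdsWithin_le_nhds).eventually (gt_mem_nhds hρ)
  obtain ⟨r, ⟨a, has, ha⟩, hrρ, hr⟩ :=
    ((Measure.eventually_nonempty_inter_smul_of_density_one μ s x h (ball y δ)
      measurableSet_ball (measure_ball_pos μ y hδ).ne').and
      (hsmall.and self_mem_nhdsWithin)).exists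
  simp only [singleton_add, mem_image, mem_smul_set] at ha
  obtain ⟨_, ⟨z, hz, rfl⟩, rfl⟩ := ha
  refine ⟨z, ⟨r⁻¹, mem_univ _, r • z, ⟨hρU ?_, has⟩, inv_smul_smul₀ hr.ne' z⟩, ?_⟩
  · rw [mem_ball_zero_iff, norm_smul, Real.norm_of_nonneg hr.le]
    calc r * ‖z‖ ≤ r * (‖y‖ + δ) := by gcongr; exact (norm_lt_of_mem_ball hz).le
      _ < ρ := hrρ
  · rwa [dist_comm]

theorem HasFDerivWithinAt.norm_apply_bounds_of_mem_tangentConeAt {E G : Type*}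
    [NormedAddCommGroup E] [NormedSpace ℝ E] [NormedAddCommGroup G] [NormedSpace ℝ G]
    {f : E → G} {f' : E →L[ℝ] G} {s : Set E} {x v : E} {a b : ℝ}
    (hf : HasFDerivWithinAt f f' s x)
    (hs : ∀ y ∈ s, a * dist y x ≤ dist (f y) (f x) ∧ dist (f y) (f x) ≤ b * dist y x)
    (hv : v ∈ tangentConeAt ℝ s x) :
    a * ‖v‖ ≤ ‖f' v‖ ∧ ‖f' v‖ ≤ b * ‖v‖ := by
  obtain ⟨α, l, _, c, d, hd₀, hds, hcd⟩ := exists_fun_of_mem_tangentConeAt hv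
  have hlim := (hf.lim hd₀ hds hcd).norm
  have hcd' := hcd.norm
  have hbounds : ∀ᶠ n in l, a * ‖c n • d n‖ ≤ ‖c n • (f (x + d n) - f x)‖ ∧
      ‖c n • (f (x + d n) - f x)‖ ≤ b * ‖c n • d n‖ := by
    filter_upwards [hds] with n hn
    obtain ⟨h₁, h₂⟩ := hs _ hn
    simp only [dist_eq_norm, add_sub_cancel_left] at h₁ h₂
    simp only [norm_smul]
    constructor <;> nlinarith [norm_nonneg (c n)]
  exact ⟨le_of_tendsto_of_tendsto (hcd'.const_mul a) hlim (hbounds.mono fun _ h => h.1),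
    le_of_tendsto_of_tendsto hlim (hcd'.const_mul b) (hbounds.mono fun _ h => h.2)⟩

theorem abs_sq_sub_sq_le_of_bounds {a b ε : ℝ} (hb : 0 ≤ b) (hε : 0 ≤ ε) (hε1 : ε ≤ 1)
    (ha : (1 - ε) * b ≤ a ∧ a ≤ (1 + ε) * b) : |a ^ 2 - b ^ 2| ≤ 3 * ε * b ^ 2 := by
  obtain ⟨hlo, hhi⟩ := ha
  have h0 : 0 ≤ (1 - ε) * b := mul_nonneg (by linarith) hb
  rw [abs_le]
  constructor <;> nlinarith [mul_le_mul hlo hlo h0 (h0.trans hlo), mul_nonneg hε hb]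

namespace ContinuousLinearMap

variable {E F : Type*} [NormedAddCommGroup E] [InnerProductSpace ℝ E] [CompleteSpace E]
  [NormedAddCommGroup F] [InnerProductSpace ℝ F] [CompleteSpace F]

theorem inner_adjoint_comp_self_sub_one_apply (L : E →L[ℝ] F) (v w : E) :
    inner ℝ ((adjoint L ∘L L - 1) v) w = inner ℝ (L v) (L w) - inner ℝ v w := by
  simp [inner_sub_left, adjoint_inner_left]

theorem norm_adjoint_comp_self_sub_one_le (L : E →L[ℝ] F) {ε : ℝ} (hε : 0 ≤ ε) (hε1 : ε ≤ 1)
    (hL : ∀ u, (1 - ε) * ‖u‖ ≤ ‖L u‖ ∧ ‖L u‖ ≤ (1 + ε) * ‖u‖) :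
    ‖adjoint L ∘L L - 1‖ ≤ 3 * ε := by
  have hsymm : ((adjoint L ∘L L - 1 : E →L[ℝ] E) : E →ₗ[ℝ] E).IsSymmetric := fun v w => by
    simp only [coe_coe]
    rw [real_inner_comm _ v, inner_adjoint_comp_self_sub_one_apply,
      inner_adjoint_comp_self_sub_one_apply, real_inner_comm (L v), real_inner_comm v]
  rw [norm_eq_iSup_rayleighQuotient _ hsymm]
  refine ciSup_le fun u => ?_
  rcases eq_or_ne u 0 with rfl | hu
  · rw [rayleighQuotient_apply_zero, abs_zero]; positivity
  have hu2 : 0 < ‖u‖ ^ 2 := by positivity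
  rw [rayleighQuotient, reApplyInnerSelf_apply, RCLike.re_to_real,
    inner_adjoint_comp_self_sub_one_apply, real_inner_self_eq_norm_sq, real_inner_self_eq_norm_sq,
    abs_div, abs_of_pos hu2, div_le_iff₀ hu2]
  exact abs_sq_sub_sq_le_of_bounds (norm_nonneg u) hε hε1 (hL u)

theorem abs_inner_apply_apply_sub_inner_le (L : E →L[ℝ] F) {ε : ℝ} (hε : 0 ≤ ε) (hε1 : ε ≤ 1)
    (hL : ∀ u, (1 - ε) * ‖u‖ ≤ ‖L u‖ ∧ ‖L u‖ ≤ (1 + ε) * ‖u‖) (v w : E) :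
    |inner ℝ (L v) (L w) - inner ℝ v w| ≤ 3 * ε * ‖v‖ * ‖w‖ :=
  calc |inner ℝ (L v) (L w) - inner ℝ v w|
      = ‖inner ℝ ((adjoint L ∘L L - 1) v) w‖ := by
        rw [inner_adjoint_comp_self_sub_one_apply, Real.norm_eq_abs]
    _ ≤ ‖adjoint L ∘L L - 1‖ * ‖v‖ * ‖w‖ :=
        (norm_inner_le_norm _ _).trans (by gcongr; exact le_opNorm _ _)
    _ ≤ 3 * ε * ‖v‖ * ‖w‖ := by gcongr; exact norm_adjoint_comp_self_sub_one_le L hε hε1 hL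

end ContinuousLinearMap

/-- Let `A ⊆ ℝⁿ` be Borel, `ε ∈ (0,1)`, `f : A → ℝᵏ` a `(1±ε)`-bi-Lipschitz embedding, and
`F : ℝⁿ → ℝᵏ` any Lipschitz map with `F|_A = f`. Then there is a constant `C > 0` depending
only on `n` such that for `ℒⁿ`-a.e. `x ∈ A` and all `v, w ∈ ℝⁿ`,
`|⟨DF(x) v, DF(x) w⟩ − ⟨v, w⟩| ≤ C ε ‖v‖ ‖w‖`. -/
theorem stmt5 (n : ℕ) : ∃ C : ℝ, 0 < C ∧
    ∀ (k : ℕ) (A : Set (EuclideanSpace ℝ (Fin n))), MeasurableSet A →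
      ∀ ε ∈ Set.Ioo (0:ℝ) 1,
        ∀ F : EuclideanSpace ℝ (Fin n) → EuclideanSpace ℝ (Fin k),
          (∃ K : ℝ≥0, LipschitzWith K F) →
          (∀ x ∈ A, ∀ y ∈ A, (1 - ε) * dist x y ≤ dist (F x) (F y) ∧
            dist (F x) (F y) ≤ (1 + ε) * dist x y) →
          ∀ᵐ x ∂(MeasureTheory.volume.restrict A),
            ∀ v w : EuclideanSpace ℝ (Fin n),
              |(inner ℝ (fderiv ℝ F x v) (fderiv ℝ F x w) : ℝ) - (inner ℝ v w : ℝ)| ≤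
                C * ε * ‖v‖ * ‖w‖ := by
  refine ⟨3, by norm_num, fun k A hA ε ⟨hε0, hε1⟩ F ⟨K, hK⟩ hbi => ?_⟩
  filter_upwards [ae_restrict_mem hA, ae_restrict_of_ae hK.ae_differentiableAt,
    Besicovitch.ae_tendsto_measure_inter_div volume A] with x hxA hdiff hdens
  have hcone := tangentConeAt_eq_univ_of_density_one volume hdens
  refine (fderiv ℝ F x).abs_inner_apply_apply_sub_inner_le hε0.le hε1.le fun u => ?_
  exact hdiff.hasFDerivAt.hasFDerivWithinAt.norm_apply_bounds_of_mem_tangentConeAt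
    (fun y hy => hbi y hy x hxA) (hcone ▸ mem_univ u)
end

section
/- Let A ⊆ ℝⁿ be a Borel set, let f : A → ℝᵏ be a Lipschitz map, and let F : ℝⁿ → ℝᵏ be any Lipschitz map with F|_A = f. Then for ℒⁿ-a.e. x ∈ A, the local slope of f at x equals the operator norm of the derivative of the extension: Lip f(x) = ‖DF(x)‖_op. -/
/-!
Where `f` has derivative `f'` at `x`, the bound `Lip f(x) ≤ ‖f'‖` holds on any set. Conversely,
for `c < c' < ‖f'‖` the directions `w` with `c' ‖w‖ < ‖f' w‖` form a nonempty open cone `U`; if `x`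
is a Lebesgue density point of `A`, then `A` meets `x + ρ • (U ∩ ball 0 1)` for all small `ρ > 0`,
giving points of `A` arbitrarily close to `x` along which `f` grows at rate at least `c`.
Rademacher's theorem and the Lebesgue density theorem make both hypotheses hold a.e. on `A`.
-/

open Metric Set MeasureTheory
open scoped NNReal ENNReal

/-- The local slope at `x` of the restriction of `f` to `S`:
`Lip (f|_S)(x) = lim_{r→0⁺} sup { d(f(x), f(y))/d(x,y) : y ∈ S ∩ B_r(x), y ≠ x }`,
with value `0` if `x` is isolated in `S` (the supremum of the empty set in `ℝ≥0∞`). -/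
noncomputable def localSlope {X Y : Type*} [MetricSpace X] [MetricSpace Y]
    (S : Set X) (f : X → Y) (x : X) : ℝ≥0∞ :=
  ⨅ (r : ℝ) (_ : 0 < r), ⨆ (y : X) (_ : y ∈ (S ∩ Metric.ball x r) \ {x}),
    edist (f x) (f y) / edist x y

open Filter Topology

section Metric

variable {X Y : Type*} [MetricSpace X] [MetricSpace Y] {S : Set X} {f : X → Y} {x : X}

theorem localSlope_le_ofReal {C : ℝ} (hC : 0 ≤ C)
    (h : ∀ᶠ y in 𝓝 x, dist (f x) (f y) ≤ C * dist x y) :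
    localSlope S f x ≤ ENNReal.ofReal C := by
  obtain ⟨r, hr, hball⟩ := Metric.eventually_nhds_iff_ball.1 h
  refine (iInf₂_le r hr).trans (iSup₂_le fun y ⟨⟨_, hy⟩, hyx⟩ => ?_)
  have hxy : edist x y ≠ 0 := (edist_pos.2 (Ne.symm hyx)).ne'
  rw [ENNReal.div_le_iff_le_mul (.inl hxy) (.inl (edist_ne_top x y)), edist_dist, edist_dist,
    ← ENNReal.ofReal_mul hC]
  exact ENNReal.ofReal_le_ofReal (hball y hy)

theorem ofReal_le_localSlope {c : ℝ} (hc : 0 ≤ c)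
    (h : ∀ r > 0, ∃ y ∈ (S ∩ ball x r) \ {x}, c * dist x y ≤ dist (f x) (f y)) :
    ENNReal.ofReal c ≤ localSlope S f x := by
  refine le_iInf₂ fun r hr => ?_
  obtain ⟨y, hy, hcy⟩ := h r hr
  refine le_trans ?_ (le_iSup₂ y hy)
  have hxy : edist x y ≠ 0 := (edist_pos.2 (Ne.symm hy.2)).ne'
  rw [ENNReal.le_div_iff_mul_le (.inl hxy) (.inl (edist_ne_top x y)), edist_dist, edist_dist,
    ← ENNReal.ofReal_mul hc]
  exact ENNReal.ofReal_le_ofReal hcy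

end Metric

section Derivative

variable {E G : Type*} [NormedAddCommGroup E] [NormedSpace ℝ E] [NormedAddCommGroup G]
  [NormedSpace ℝ G] {f : E → G} {f' : E →L[ℝ] G} {x : E}

theorem HasFDerivAt.localSlope_le (hf : HasFDerivAt f f' x) (S : Set E) :
    localSlope S f x ≤ ENNReal.ofReal ‖f'‖ := by
  refine ENNReal.le_of_forall_pos_le_add fun ε hε _ => ?_
  rw [← ENNReal.ofReal_coe_nnreal, ← ENNReal.ofReal_add (norm_nonneg _) ε.coe_nonneg]
  refine localSlope_le_ofReal (by positivity) ?_
  filter_upwards [hf.isLittleO.def (NNReal.coe_pos.2 hε)] with y hy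
  rw [dist_comm (f x), dist_comm x, dist_eq_norm, dist_eq_norm]
  calc ‖f y - f x‖ ≤ ‖f' (y - x)‖ + ‖f y - f x - f' (y - x)‖ := norm_le_insert' _ _
    _ ≤ ‖f'‖ * ‖y - x‖ + ε * ‖y - x‖ := add_le_add (f'.le_opNorm _) hy
    _ = (‖f'‖ + ε) * ‖y - x‖ := by ring

variable [FiniteDimensional ℝ E] [MeasurableSpace E] [BorelSpace E]
  (μ : Measure E) [μ.IsAddHaarMeasure] {S : Set E}

theorem HasFDerivAt.exists_mem_mul_dist_le_dist_of_density_one (hf : HasFDerivAt f f' x)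
    (hS : Tendsto (fun r => μ (S ∩ closedBall x r) / μ (closedBall x r)) (𝓝[>] 0) (𝓝 1))
    {c : ℝ} (hc : 0 ≤ c) (hcf : c < ‖f'‖) {r : ℝ} (hr : 0 < r) :
    ∃ y ∈ (S ∩ ball x r) \ {x}, c * dist x y ≤ dist (f x) (f y) := by
  obtain ⟨c', hcc', hc'f⟩ := exists_between hcf
  set U := {w : E | c' * ‖w‖ < ‖f' w‖} ∩ ball 0 1
  have hU : IsOpen U := (isOpen_lt (by fun_prop) (by fun_prop)).inter isOpen_ball
  obtain ⟨w₀, hw₀, hfw₀⟩ := f'.exists_lt_apply_of_lt_opNorm hc'f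
  have hU₀ : w₀ ∈ U :=
    ⟨show c' * ‖w₀‖ < ‖f' w₀‖ by nlinarith [norm_nonneg w₀], mem_ball_zero_iff.2 hw₀⟩
  obtain ⟨r₀, hr₀, hsmall⟩ :=
    Metric.eventually_nhds_iff_ball.1 (hf.isLittleO.def (sub_pos.2 hcc'))
  obtain ⟨ρ, ⟨y, hyS, hyU⟩, hρr, hρ⟩ :=
    ((Measure.eventually_nonempty_inter_smul_of_density_one μ S x hS U hU.measurableSet
      (hU.measure_pos μ ⟨w₀, hU₀⟩).ne').and
      ((eventually_lt_nhds (lt_min hr hr₀)).filter_mono nhdsWithin_le_nhds |>.and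
        self_mem_nhdsWithin)).exists
  obtain ⟨x', hx', _, ⟨w, ⟨hfw : c' * ‖w‖ < ‖f' w‖, hw₁⟩, rfl⟩, rfl⟩ := hyU
  rw [mem_singleton_iff] at hx'
  subst x'
  have hw : w ≠ 0 := by rintro rfl; simp at hfw
  have hdist : dist x (x + ρ • w) = ρ * ‖w‖ := by
    rw [dist_comm, dist_eq_norm, add_sub_cancel_left, norm_smul, Real.norm_of_nonneg hρ.le]
  have hclose : dist x (x + ρ • w) < min r r₀ := by
    rw [hdist]
    exact lt_of_lt_of_le (mul_lt_of_lt_one_right hρ (mem_ball_zero_iff.1 hw₁)) hρr.le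
  refine ⟨x + ρ • w, ⟨⟨hyS, mem_ball_comm.1 (hclose.trans_le (min_le_left _ _))⟩, ?_⟩, ?_⟩
  · simpa [hρ.ne'] using hw
  have hrem := hsmall _ (mem_ball_comm.1 (hclose.trans_le (min_le_right _ _)))
  rw [add_sub_cancel_left, f'.map_smul, norm_smul, Real.norm_of_nonneg hρ.le] at hrem
  rw [hdist, dist_comm, dist_eq_norm]
  calc c * (ρ * ‖w‖) = ρ * (c' * ‖w‖) - (c' - c) * (ρ * ‖w‖) := by ring
    _ ≤ ρ * ‖f' w‖ - ‖f (x + ρ • w) - f x - ρ • f' w‖ := by gcongr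
    _ ≤ ‖f (x + ρ • w) - f x‖ := by
      have := norm_le_norm_add_norm_sub (f (x + ρ • w) - f x) (ρ • f' w)
      rw [norm_smul, Real.norm_of_nonneg hρ.le] at this
      linarith

theorem HasFDerivAt.localSlope_eq_of_density_one (hf : HasFDerivAt f f' x)
    (hS : Tendsto (fun r => μ (S ∩ closedBall x r) / μ (closedBall x r)) (𝓝[>] 0) (𝓝 1)) :
    localSlope S f x = ENNReal.ofReal ‖f'‖ := by
  refine (hf.localSlope_le S).antisymm (le_of_forall_lt_imp_le_of_dense fun a ha => ?_)
  rw [← ENNReal.ofReal_toReal ha.ne_top]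
  exact ofReal_le_localSlope ENNReal.toReal_nonneg fun r hr =>
    hf.exists_mem_mul_dist_le_dist_of_density_one μ hS ENNReal.toReal_nonneg
      ((ENNReal.lt_ofReal_iff_toReal_lt ha.ne_top).1 ha) hr

end Derivative

theorem stmt6_general (n k : ℕ) (A : Set (EuclideanSpace ℝ (Fin n)))
    (F : EuclideanSpace ℝ (Fin n) → EuclideanSpace ℝ (Fin k))
    (hF : ∃ K : ℝ≥0, LipschitzWith K F) :
    ∀ᵐ x ∂(MeasureTheory.volume.restrict A),
      localSlope A F x = ENNReal.ofReal ‖fderiv ℝ F x‖ := by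
  obtain ⟨K, hK⟩ := hF
  filter_upwards [ae_restrict_of_ae hK.ae_differentiableAt,
    Besicovitch.ae_tendsto_measure_inter_div volume A] with x hFx hAx
  exact hFx.hasFDerivAt.localSlope_eq_of_density_one volume hAx

/-- Let `A ⊆ ℝⁿ` be Borel, `f : A → ℝᵏ` Lipschitz, and `F : ℝⁿ → ℝᵏ` any Lipschitz map with
`F|_A = f`. Then for `ℒⁿ`-a.e. `x ∈ A`, the local slope of `f` at `x` equals the operator
norm of the derivative of the extension: `Lip f(x) = ‖DF(x)‖_op`. -/
theorem stmt6 (n k : ℕ) (A : Set (EuclideanSpace ℝ (Fin n))) (hA : MeasurableSet A)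
    (F : EuclideanSpace ℝ (Fin n) → EuclideanSpace ℝ (Fin k))
    (hF : ∃ K : ℝ≥0, LipschitzWith K F) :
    ∀ᵐ x ∂(MeasureTheory.volume.restrict A),
      localSlope A F x = ENNReal.ofReal ‖fderiv ℝ F x‖ :=
  stmt6_general n k A F hF
end

section
/- Let f : ℝⁿ → ℝᵐ be a Lipschitz map and let x ∈ ℝⁿ be a point at which f is differentiable. Then lim_{r→0⁺} (1/ℒⁿ(B_r(x))) ∫_{B_r(x)} ‖f(y) − f(x)‖²/r² dℒⁿ(y) = ‖Df(x)‖_HS²/(n+2). -/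
/-!
On `B_r(x)`, replacing `f y - f x` by `Df(x)(y - x)` changes `‖f y - f x‖²` by `o(r²)`, so the
two averages differ by `o(1)`. The average of `‖Df(x)(y - x)‖² / r²` over `B_r(x)` does not
depend on `r` (rescale to the unit ball). On the unit ball, the reflections `vᵢ ↦ -vᵢ` kill the
mixed moments `∫ vᵢ vⱼ` and the coordinate swaps make all `∫ vᵢ²` equal; their sum `∫ ‖v‖²` is
computed in polar coordinates.
-/

open Metric MeasureTheory Filter Topology Asymptotics Module
open scoped NNReal

theorem norm_setAverage_sub_setAverage_le {α G : Type*} [MeasurableSpace α] [NormedAddCommGroup G]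
    [NormedSpace ℝ G] {μ : Measure α} {s : Set α} {g h : α → G} {C : ℝ}
    (hs₀ : μ s ≠ 0) (hs : μ s < ⊤) (hg : IntegrableOn g s μ) (hh : IntegrableOn h s μ)
    (hC : ∀ x ∈ s, ‖g x - h x‖ ≤ C) :
    ‖⨍ x in s, g x ∂μ - ⨍ x in s, h x ∂μ‖ ≤ C := by
  have hpos : 0 < μ.real s := ENNReal.toReal_pos hs₀ hs.ne
  rw [setAverage_eq, setAverage_eq, ← smul_sub, ← integral_sub hg hh, norm_smul,
    Real.norm_of_nonneg (inv_nonneg.2 hpos.le), inv_mul_le_iff₀ hpos, mul_comm]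
  exact norm_setIntegral_le_of_norm_le_const hs hC

theorem Continuous.integrableOn_ball {X G : Type*} [MetricSpace X] [ProperSpace X]
    [MeasurableSpace X] [OpensMeasurableSpace X] [NormedAddCommGroup G] {μ : Measure X} [IsFiniteMeasureOnCompacts μ] {g : X → G}
    (hg : Continuous g) (x : X) (r : ℝ) : IntegrableOn g (ball x r) μ :=
  (hg.continuousOn.integrableOn_compact (isCompact_closedBall x r)).mono_set
    ball_subset_closedBall

section Normed

variable {E F : Type*} [NormedAddCommGroup E] [NormedSpace ℝ E]
  [NormedAddCommGroup F] [NormedSpace ℝ F]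

theorem HasFDerivAt.isLittleO_sq_norm_sub_sub_sq_norm {f : E → F} {T : E →L[ℝ] F} {x : E}
    (hf : HasFDerivAt f T x) :
    (fun y => ‖f y - f x‖ ^ 2 - ‖T (y - x)‖ ^ 2) =o[𝓝 x] fun y => ‖y - x‖ ^ 2 := by
  have hdiff : (fun y => ‖f y - f x‖ - ‖T (y - x)‖) =o[𝓝 x] fun y => ‖y - x‖ :=
    ((isBigO_of_le _ fun y => by
      simpa using abs_norm_sub_norm_le (f y - f x) (T (y - x))).trans_isLittleO
        hf.isLittleO).norm_right
  have hsum : (fun y => ‖f y - f x‖ + ‖T (y - x)‖) =O[𝓝 x] fun y => ‖y - x‖ :=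
    (hf.isBigO_sub.norm_left.add (T.isBigO_sub _ x).norm_left).norm_right
  exact (hdiff.mul_isBigO hsum).congr (fun y => by ring) (fun y => by ring)

variable [FiniteDimensional ℝ E] [MeasurableSpace E] [BorelSpace E]
  (μ : Measure E) [μ.IsAddHaarMeasure]

theorem setIntegral_ball_comp_inv_smul_sub (g : E → F) (x : E) {r : ℝ} (hr : 0 < r) :
    ∫ y in ball x r, g (r⁻¹ • (y - x)) ∂μ = r ^ finrank ℝ E • ∫ v in ball 0 1, g v ∂μ := by
  have htrans : ∫ y in ball x r, g (r⁻¹ • (y - x)) ∂μ = ∫ z in ball 0 r, g (r⁻¹ • z) ∂μ := by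
    have h := (measurePreserving_sub_right μ x).setIntegral_preimage_emb
      (measurableEmbedding_subRight x) (fun z => g (r⁻¹ • z)) (ball 0 r)
    rwa [show (fun y => y - x) ⁻¹' ball (0 : E) r = ball x r by
      ext y; simp [dist_eq_norm]] at h
  have hscale := Measure.setIntegral_comp_smul_of_pos μ (fun z => g (r⁻¹ • z)) (ball 0 1) hr
  simp only [smul_smul, inv_mul_cancel₀ hr.ne', one_smul, smul_unitBall_of_pos hr] at hscale
  rw [htrans, hscale, smul_inv_smul₀ (pow_ne_zero _ hr.ne')]

theorem setAverage_ball_comp_inv_smul_sub (g : E → F) (x : E) {r : ℝ} (hr : 0 < r) :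
    ⨍ y in ball x r, g (r⁻¹ • (y - x)) ∂μ = ⨍ v in ball 0 1, g v ∂μ := by
  rw [setAverage_eq, setAverage_eq, setIntegral_ball_comp_inv_smul_sub μ g x hr, measureReal_def,
    Measure.addHaar_ball_of_pos μ x hr, ENNReal.toReal_mul,
    ENNReal.toReal_ofReal (pow_nonneg hr.le _), ← measureReal_def, smul_smul, mul_inv_rev,
    inv_mul_cancel_right₀ (pow_ne_zero _ hr.ne')]

theorem HasFDerivAt.tendsto_setAverage_ball_sq_norm_sub_div_sq {f : E → F} {T : E →L[ℝ] F}
    {x : E} (hf : HasFDerivAt f T x) (hfc : Continuous f) :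
    Tendsto (fun r => ⨍ y in ball x r, ‖f y - f x‖ ^ 2 / r ^ 2 ∂μ) (𝓝[>] 0)
      (𝓝 (⨍ v in ball 0 1, ‖T v‖ ^ 2 ∂μ)) := by
  rw [Metric.tendsto_nhds]
  intro ε hε
  obtain ⟨δ, hδ, hsmall⟩ :=
    Metric.eventually_nhds_iff.1 (hf.isLittleO_sq_norm_sub_sub_sq_norm.def (half_pos hε))
  filter_upwards [Ioo_mem_nhdsGT hδ] with r ⟨hr, hrδ⟩
  have hr2 : 0 < r ^ 2 := by positivity
  rw [← setAverage_ball_comp_inv_smul_sub μ (fun v => ‖T v‖ ^ 2) x hr, dist_eq_norm]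
  refine (norm_setAverage_sub_setAverage_le (measure_ball_pos μ x hr).ne' measure_ball_lt_top
    ((by fun_prop : Continuous _).integrableOn_ball x r)
    ((by fun_prop : Continuous _).integrableOn_ball x r) fun y hy => ?_).trans_lt (half_lt_self hε)
  have hyx : ‖y - x‖ < r := mem_ball_iff_norm.1 hy
  have hy := hsmall ((mem_ball.1 hy).trans hrδ)
  rw [map_smul, norm_smul, norm_inv, Real.norm_of_nonneg hr.le, mul_pow, inv_pow, inv_mul_eq_div,
    div_sub_div_same, norm_div, Real.norm_of_nonneg hr2.le, div_le_iff₀ hr2]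
  rw [Real.norm_of_nonneg (sq_nonneg _)] at hy
  calc _ ≤ ε / 2 * ‖y - x‖ ^ 2 := hy
    _ ≤ ε / 2 * r ^ 2 := by gcongr

theorem setIntegral_unitBall_norm_pow [Nontrivial E] (k : ℕ) :
    ∫ v in ball (0 : E) 1, ‖v‖ ^ k ∂μ
      = finrank ℝ E / (finrank ℝ E + k) * μ.real (ball 0 1) := by
  have hd : 0 < finrank ℝ E := finrank_pos
  have hradial := integral_fun_norm_addHaar μ ((Set.Iio 1).indicator (· ^ k))
  have hball : (norm : E → ℝ) ⁻¹' Set.Iio 1 = ball 0 1 := by ext v; simp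
  simp only [← Set.indicator_comp_right (norm : E → ℝ), hball, Function.comp_def,
    integral_indicator measurableSet_ball] at hradial
  have hpow : ∫ y in Set.Ioi (0 : ℝ), y ^ (finrank ℝ E - 1) • (Set.Iio 1).indicator (· ^ k) y
      = 1 / (finrank ℝ E + k) := by
    simp_rw [← Set.indicator_smul, smul_eq_mul, ← pow_add]
    rw [integral_indicator measurableSet_Iio, Measure.restrict_restrict measurableSet_Iio,
      Set.Iio_inter_Ioi, ← integral_Ioc_eq_integral_Ioo,
      ← intervalIntegral.integral_of_le zero_le_one, integral_pow]
    push_cast [Nat.cast_sub hd]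
    ring
  rw [hradial, hpow, nsmul_eq_mul, smul_eq_mul]
  ring

end Normed

theorem setIntegral_ball_comp_linearIsometryEquiv {E G : Type*} [NormedAddCommGroup E]
    [InnerProductSpace ℝ E] [FiniteDimensional ℝ E] [MeasurableSpace E] [BorelSpace E]
    [NormedAddCommGroup G] [NormedSpace ℝ G] (e : E ≃ₗᵢ[ℝ] E) (g : E → G) (r : ℝ) :
    ∫ v in ball 0 r, g (e v) = ∫ v in ball 0 r, g v := by
  have h := e.measurePreserving.setIntegral_preimage_emb e.toHomeomorph.measurableEmbedding g
    (ball 0 r)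
  rwa [show e ⁻¹' ball 0 r = ball 0 r by ext v; simp] at h

section Euclidean

variable {n : ℕ}

theorem setIntegral_unitBall_coord_mul_coord_of_ne {i j : Fin n} (hij : i ≠ j) :
    ∫ v in ball (0 : EuclideanSpace ℝ (Fin n)) 1, v i * v j = 0 := by
  classical
  let e : EuclideanSpace ℝ (Fin n) ≃ₗᵢ[ℝ] EuclideanSpace ℝ (Fin n) :=
    LinearIsometryEquiv.piLpCongrRight 2
      fun k => if k = i then LinearIsometryEquiv.neg ℝ else LinearIsometryEquiv.refl ℝ ℝ
  have he : ∀ v : EuclideanSpace ℝ (Fin n), e v i * e v j = -(v i * v j) := by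
    intro v
    simp [e, LinearIsometryEquiv.piLpCongrRight_apply, hij.symm]
  have h := setIntegral_ball_comp_linearIsometryEquiv e (fun v => v i * v j) 1
  simp only [he, integral_neg] at h
  linarith

theorem setIntegral_unitBall_coord_sq (i : Fin n) :
    ∫ v in ball (0 : EuclideanSpace ℝ (Fin n)) 1, v i ^ 2
      = volume.real (ball (0 : EuclideanSpace ℝ (Fin n)) 1) / (n + 2) := by
  have : Nonempty (Fin n) := ⟨i⟩
  have hswap : ∀ j, ∫ v in ball (0 : EuclideanSpace ℝ (Fin n)) 1, v j ^ 2
      = ∫ v in ball (0 : EuclideanSpace ℝ (Fin n)) 1, v i ^ 2 := fun j => by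
    simpa [LinearIsometryEquiv.piLpCongrLeft_apply, Equiv.piCongrLeft'_apply] using
      setIntegral_ball_comp_linearIsometryEquiv
        (LinearIsometryEquiv.piLpCongrLeft 2 ℝ ℝ (Equiv.swap i j)) (fun v => v i ^ 2) 1
  have hsum : ∑ j : Fin n, ∫ v in ball (0 : EuclideanSpace ℝ (Fin n)) 1, v j ^ 2
      = ∫ v in ball (0 : EuclideanSpace ℝ (Fin n)) 1, ‖v‖ ^ 2 := by
    rw [← integral_finsetSum _ fun j _ => (by fun_prop : Continuous _).integrableOn_ball _ _]
    simp [EuclideanSpace.norm_sq_eq]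
  rw [Finset.sum_congr rfl fun j _ => hswap j, Finset.sum_const, Finset.card_univ, Fintype.card_fin,
    setIntegral_unitBall_norm_pow, finrank_euclideanSpace_fin, nsmul_eq_mul] at hsum
  have hn : (n : ℝ) ≠ 0 := by exact_mod_cast (Fin.pos i).ne'
  push_cast at hsum
  field_simp at hsum ⊢
  linarith

theorem setIntegral_unitBall_coord_mul_coord (i j : Fin n) :
    ∫ v in ball (0 : EuclideanSpace ℝ (Fin n)) 1, v i * v j
      = if i = j then volume.real (ball (0 : EuclideanSpace ℝ (Fin n)) 1) / (n + 2) else 0 := by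
  split_ifs with hij
  · simp only [hij, ← sq, setIntegral_unitBall_coord_sq]
  · exact setIntegral_unitBall_coord_mul_coord_of_ne hij

theorem setIntegral_unitBall_norm_sq_apply {F : Type*} [NormedAddCommGroup F]
    [InnerProductSpace ℝ F] (T : EuclideanSpace ℝ (Fin n) →L[ℝ] F) :
    ∫ v in ball (0 : EuclideanSpace ℝ (Fin n)) 1, ‖T v‖ ^ 2
      = (∑ i, ‖T (EuclideanSpace.single i 1)‖ ^ 2)
        * (volume.real (ball (0 : EuclideanSpace ℝ (Fin n)) 1) / (n + 2)) := by
  set s : Fin n → F := fun i => T (EuclideanSpace.single i 1)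
  have hexp : ∀ v : EuclideanSpace ℝ (Fin n),
      ‖T v‖ ^ 2 = ∑ i, ∑ j, inner ℝ (s i) (s j) * (v i * v j) := fun v => by
    have hTv : T v = ∑ i, v i • s i := by
      conv_lhs => rw [← (EuclideanSpace.basisFun (Fin n) ℝ).sum_repr v]
      simp [s]
    simp only [← real_inner_self_eq_norm_sq, hTv, sum_inner, inner_sum, real_inner_smul_left,
      real_inner_smul_right]
    exact Finset.sum_congr rfl fun i _ => Finset.sum_congr rfl fun j _ => by
      rw [real_inner_comm]; ring
  have hint : ∀ i j, IntegrableOn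
      (fun v : EuclideanSpace ℝ (Fin n) => inner ℝ (s i) (s j) * (v i * v j)) (ball 0 1) :=
    fun i j => (by fun_prop : Continuous _).integrableOn_ball _ _
  calc ∫ v in ball 0 1, ‖T v‖ ^ 2
      = ∑ i, ∑ j, inner ℝ (s i) (s j) *
          ∫ v in ball (0 : EuclideanSpace ℝ (Fin n)) 1, v i * v j := by
        simp_rw [hexp, integral_finsetSum _ fun i _ => integrable_finsetSum _ fun j _ => hint i j,
          integral_finsetSum _ fun j _ => hint _ j, integral_const_mul]
    _ = _ := by
        simp [setIntegral_unitBall_coord_mul_coord, Finset.sum_mul, s]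

theorem setAverage_unitBall_norm_sq_apply {F : Type*} [NormedAddCommGroup F]
    [InnerProductSpace ℝ F] (T : EuclideanSpace ℝ (Fin n) →L[ℝ] F) :
    ⨍ v in ball (0 : EuclideanSpace ℝ (Fin n)) 1, ‖T v‖ ^ 2
      = (∑ i, ‖T (EuclideanSpace.single i 1)‖ ^ 2) / (n + 2) := by
  have hvol : volume.real (ball (0 : EuclideanSpace ℝ (Fin n)) 1) ≠ 0 :=
    (ENNReal.toReal_pos (measure_ball_pos volume 0 one_pos).ne' measure_ball_lt_top.ne).ne'
  rw [setAverage_eq, setIntegral_unitBall_norm_sq_apply, smul_eq_mul]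
  field_simp

end Euclidean

/-- Let `f : ℝⁿ → ℝᵐ` be Lipschitz and differentiable at `x`. Then
`lim_{r→0⁺} (1/ℒⁿ(B_r(x))) ∫_{B_r(x)} ‖f(y) − f(x)‖²/r² dℒⁿ(y) = ‖Df(x)‖_HS²/(n+2)`,
where `‖Df(x)‖_HS² = Σᵢ ‖Df(x) eᵢ‖²` for the standard orthonormal basis `(eᵢ)` of `ℝⁿ`. -/
theorem stmt8 (n m : ℕ) (K : ℝ≥0)
    (f : EuclideanSpace ℝ (Fin n) → EuclideanSpace ℝ (Fin m))
    (hf : LipschitzWith K f)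
    (x : EuclideanSpace ℝ (Fin n)) (hx : DifferentiableAt ℝ f x) :
    Tendsto (fun r : ℝ =>
        (volume (Metric.ball x r)).toReal⁻¹ *
          ∫ y in Metric.ball x r, ‖f y - f x‖ ^ 2 / r ^ 2 ∂volume)
      (𝓝[>] 0)
      (𝓝 ((∑ i : Fin n, ‖fderiv ℝ f x (EuclideanSpace.single i 1)‖ ^ 2) / ((n : ℝ) + 2))) := by
  have hblowup :=
    hx.hasFDerivAt.tendsto_setAverage_ball_sq_norm_sub_div_sq volume hf.continuous
  rw [setAverage_unitBall_norm_sq_apply] at hblowup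
  refine hblowup.congr fun r => ?_
  rw [setAverage_eq, smul_eq_mul, measureReal_def]
end

section
/- There exists a constant C > 0 depending only on n with the following property. Let V be an n-dimensional real inner product space, let L : V × V → ℝ be a symmetric bilinear form, and set ‖L‖_B := sup_{‖u‖=1} |L(u, u)|. Let ε ∈ (0, 1/(2n)) and let v₁, …, vₙ ∈ V satisfy |⟨v_i, v_j⟩ − δ_{ij}| ≤ ε for all i, j. Then | sup_{a ∈ ℝⁿ, Σ_i a_i² = 1} |L(Σ_i a_i v_i, Σ_i a_i v_i)| − ‖L‖_B | ≤ C ‖L‖_B ε. -/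
/-!
The Gram estimate `|⟪vᵢ, vⱼ⟫ - δᵢⱼ| ≤ ε` gives `|‖∑ aᵢ vᵢ‖² - ∑ aᵢ²| ≤ n ε ∑ aᵢ²`. For `n ε < 1`
the `vᵢ` are therefore a basis, and `a ↦ ∑ aᵢ vᵢ` distorts squared norms by a factor in
`[1 - n ε, 1 + n ε]`. Since `u ↦ |L(u, u)|` is homogeneous of degree two, both suprema are
comparable up to the same factor: `(1 - n ε) ‖L‖_B ≤ sup ≤ (1 + n ε) ‖L‖_B`, so `C = n + 1` works.
-/
section AlmostOrthonormal

variable {ι : Type*} [Fintype ι]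

lemma abs_sum_sum_mul_sub_sum_sq_le [DecidableEq ι] {ε : ℝ} (hε : 0 ≤ ε) (g : ι → ι → ℝ)
    (hg : ∀ i j, |g i j - (if i = j then 1 else 0)| ≤ ε) (b : ι → ℝ) :
    |∑ i, ∑ j, b i * b j * g i j - ∑ i, b i ^ 2| ≤ Fintype.card ι * ε * ∑ i, b i ^ 2 := by
  have hdiag : ∀ i, ∑ j, b i * b j * (if i = j then (1 : ℝ) else 0) = b i ^ 2 := fun i => by
    simp [pow_two]
  calc |∑ i, ∑ j, b i * b j * g i j - ∑ i, b i ^ 2|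
      = |∑ i, ∑ j, b i * b j * (g i j - if i = j then 1 else 0)| := by
        simp only [mul_sub, Finset.sum_sub_distrib, hdiag]
    _ ≤ ∑ i, ∑ j, |b i| * |b j| * ε := by
        refine (Finset.abs_sum_le_sum_abs _ _).trans <| Finset.sum_le_sum fun i _ =>
          (Finset.abs_sum_le_sum_abs _ _).trans <| Finset.sum_le_sum fun j _ => ?_
        rw [abs_mul, abs_mul]
        exact mul_le_mul_of_nonneg_left (hg i j) (by positivity)
    _ = (∑ i, |b i|) ^ 2 * ε := by
        rw [pow_two, Finset.sum_mul_sum, Finset.sum_mul]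
        simp only [Finset.sum_mul]
    _ ≤ (Fintype.card ι * ∑ i, |b i| ^ 2) * ε := by
        gcongr
        exact sq_sum_le_card_mul_sum_sq
    _ = Fintype.card ι * ε * ∑ i, b i ^ 2 := by
        simp only [sq_abs]; ring

variable {E : Type*} [NormedAddCommGroup E] [InnerProductSpace ℝ E]

lemma norm_sum_smul_sq (v : ι → E) (b : ι → ℝ) :
    ‖∑ i, b i • v i‖ ^ 2 = ∑ i, ∑ j, b i * b j * inner ℝ (v i) (v j) := by
  rw [← real_inner_self_eq_norm_sq]
  simp only [inner_sum, sum_inner, real_inner_smul_left, real_inner_smul_right]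
  rw [Finset.sum_comm]
  exact Finset.sum_congr rfl fun i _ => Finset.sum_congr rfl fun j _ => by ring

variable [DecidableEq ι] {v : ι → E} {ε : ℝ}

lemma abs_norm_sum_smul_sq_sub_le
    (hv : ∀ i j, |inner ℝ (v i) (v j) - (if i = j then 1 else 0)| ≤ ε) (hε : 0 ≤ ε) (b : ι → ℝ) :
    |‖∑ i, b i • v i‖ ^ 2 - ∑ i, b i ^ 2| ≤ Fintype.card ι * ε * ∑ i, b i ^ 2 := by
  rw [norm_sum_smul_sq]
  exact abs_sum_sum_mul_sub_sum_sq_le hε _ hv b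

lemma linearIndependent_of_inner_near_kronecker
    (hv : ∀ i j, |inner ℝ (v i) (v j) - (if i = j then 1 else 0)| ≤ ε) (hε : 0 ≤ ε)
    (hδ : Fintype.card ι * ε < 1) : LinearIndependent ℝ v := by
  rw [Fintype.linearIndependent_iff]
  intro b hb
  have hbound := abs_norm_sum_smul_sq_sub_le hv hε b
  rw [hb, norm_zero, zero_pow two_ne_zero, zero_sub, abs_neg,
    abs_of_nonneg (by positivity)] at hbound
  have hsum : ∑ i, b i ^ 2 = 0 := by nlinarith [show 0 ≤ ∑ i, b i ^ 2 by positivity]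
  exact fun i => (Finset.sum_mul_self_eq_zero_iff _ b).mp (by simpa only [sq] using hsum) i
    (Finset.mem_univ i)

end AlmostOrthonormal

section QuadraticValues

variable {V : Type*} [NormedAddCommGroup V] [NormedSpace ℝ V] (L : V →ₗ[ℝ] V →ₗ[ℝ] ℝ)

def unitQuadValues : Set ℝ := {x : ℝ | ∃ u : V, ‖u‖ = 1 ∧ x = |L u u|}

def frameQuadValues {ι : Type*} [Fintype ι] (v : ι → V) : Set ℝ :=
  {x : ℝ | ∃ a : ι → ℝ, (∑ i, (a i) ^ 2) = 1 ∧ x = |L (∑ i, a i • v i) (∑ i, a i • v i)|}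

lemma abs_apply_smul_smul (c : ℝ) (u : V) : |L (c • u) (c • u)| = c ^ 2 * |L u u| := by
  simp only [map_smul, LinearMap.smul_apply, smul_eq_mul, abs_mul, ← mul_assoc, abs_mul_abs_self,
    pow_two]

lemma bddAbove_unitQuadValues [FiniteDimensional ℝ V] : BddAbove (unitQuadValues L) := by
  let L' : V →L[ℝ] V →L[ℝ] ℝ :=
    LinearMap.toContinuousLinearMap (LinearMap.toContinuousLinearMap.toLinearMap ∘ₗ L)
  refine ⟨‖L'‖, ?_⟩
  rintro x ⟨u, hu, rfl⟩
  simpa [L', hu] using L'.le_opNorm₂ u u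

lemma sSup_unitQuadValues_nonneg : 0 ≤ sSup (unitQuadValues L) :=
  Real.sSup_nonneg <| by rintro x ⟨u, -, rfl⟩; exact abs_nonneg _

lemma sSup_frameQuadValues_nonneg {ι : Type*} [Fintype ι] (v : ι → V) :
    0 ≤ sSup (frameQuadValues L v) :=
  Real.sSup_nonneg <| by rintro x ⟨a, -, rfl⟩; exact abs_nonneg _

lemma abs_apply_self_le_sSup_mul_norm_sq (hL : BddAbove (unitQuadValues L)) (u : V) :
    |L u u| ≤ sSup (unitQuadValues L) * ‖u‖ ^ 2 := by
  rcases eq_or_ne u 0 with rfl | hu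
  · simp
  have hunit : |L (‖u‖⁻¹ • u) (‖u‖⁻¹ • u)| ≤ sSup (unitQuadValues L) :=
    le_csSup hL ⟨_, norm_smul_inv_norm hu, rfl⟩
  rw [abs_apply_smul_smul, inv_pow, inv_mul_le_iff₀ (pow_pos (norm_pos_iff.mpr hu) 2)]
    at hunit
  rwa [mul_comm]

lemma abs_apply_sum_smul_le_sum_sq_mul_sSup {ι : Type*} [Fintype ι] {v : ι → V}
    (hL : BddAbove (frameQuadValues L v)) (b : ι → ℝ) :
    |L (∑ i, b i • v i) (∑ i, b i • v i)| ≤ (∑ i, b i ^ 2) * sSup (frameQuadValues L v) := by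
  set t := ∑ i, b i ^ 2
  rcases (show 0 ≤ t by positivity).eq_or_lt with ht | ht
  · have hb : b = 0 := funext fun i =>
      (Finset.sum_mul_self_eq_zero_iff _ b).mp (by simpa only [t, sq] using ht.symm) i
        (Finset.mem_univ i)
    simp [← ht, hb]
  set s := Real.sqrt t
  have hs : 0 < s := Real.sqrt_pos.mpr ht
  have hs2 : s ^ 2 = t := Real.sq_sqrt ht.le
  have hunit : ∑ i, (s⁻¹ * b i) ^ 2 = 1 := by
    simp only [mul_pow, ← Finset.mul_sum, inv_pow, hs2]
    exact inv_mul_cancel₀ ht.ne'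
  have hmem := le_csSup hL ⟨_, hunit, rfl⟩
  simp only [mul_smul, ← Finset.smul_sum, abs_apply_smul_smul, inv_pow, hs2] at hmem
  rwa [← inv_mul_le_iff₀ ht]

end QuadraticValues

section Comparison

variable {V : Type*} [NormedAddCommGroup V] [InnerProductSpace ℝ V] [FiniteDimensional ℝ V]
  {ι : Type*} [Fintype ι] [DecidableEq ι] (L : V →ₗ[ℝ] V →ₗ[ℝ] ℝ) {v : ι → V} {ε : ℝ}

lemma le_of_mem_frameQuadValues
    (hv : ∀ i j, |inner ℝ (v i) (v j) - (if i = j then 1 else 0)| ≤ ε) (hε : 0 ≤ ε) {x : ℝ}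
    (hx : x ∈ frameQuadValues L v) :
    x ≤ (1 + Fintype.card ι * ε) * sSup (unitQuadValues L) := by
  obtain ⟨a, ha, rfl⟩ := hx
  have hnorm : ‖∑ i, a i • v i‖ ^ 2 ≤ 1 + Fintype.card ι * ε := by
    have := (abs_le.mp (abs_norm_sum_smul_sq_sub_le hv hε a)).2
    rw [ha] at this
    linarith
  calc |L (∑ i, a i • v i) (∑ i, a i • v i)|
      ≤ sSup (unitQuadValues L) * ‖∑ i, a i • v i‖ ^ 2 :=
        abs_apply_self_le_sSup_mul_norm_sq L (bddAbove_unitQuadValues L) _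
    _ ≤ sSup (unitQuadValues L) * (1 + Fintype.card ι * ε) := by
        gcongr
        exact sSup_unitQuadValues_nonneg L
    _ = (1 + Fintype.card ι * ε) * sSup (unitQuadValues L) := mul_comm _ _

lemma sSup_frameQuadValues_le
    (hv : ∀ i j, |inner ℝ (v i) (v j) - (if i = j then 1 else 0)| ≤ ε) (hε : 0 ≤ ε) :
    sSup (frameQuadValues L v) ≤ (1 + Fintype.card ι * ε) * sSup (unitQuadValues L) :=
  Real.sSup_le (fun _ hx => le_of_mem_frameQuadValues L hv hε hx) <|
    mul_nonneg (by positivity) (sSup_unitQuadValues_nonneg L)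

lemma sSup_unitQuadValues_le
    (hv : ∀ i j, |inner ℝ (v i) (v j) - (if i = j then 1 else 0)| ≤ ε) (hε : 0 ≤ ε)
    (hδ : Fintype.card ι * ε < 1) (hcard : Fintype.card ι = Module.finrank ℝ V) :
    (1 - Fintype.card ι * ε) * sSup (unitQuadValues L) ≤ sSup (frameQuadValues L v) := by
  have hspan := (linearIndependent_of_inner_near_kronecker hv hε hδ).span_eq_top_of_card_eq_finrank'
    hcard
  have hbdd : BddAbove (frameQuadValues L v) :=
    ⟨_, fun _ hx => le_of_mem_frameQuadValues L hv hε hx⟩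
  set A := sSup (frameQuadValues L v)
  have hA : 0 ≤ A := sSup_frameQuadValues_nonneg L v
  suffices h : ∀ x ∈ unitQuadValues L, x ≤ A / (1 - Fintype.card ι * ε) by
    rw [mul_comm, ← le_div_iff₀ (sub_pos.mpr hδ)]
    exact Real.sSup_le h (div_nonneg hA (sub_pos.mpr hδ).le)
  rintro x ⟨u, hu, rfl⟩
  have hu_span : u ∈ Submodule.span ℝ (Set.range v) := hspan ▸ Submodule.mem_top
  obtain ⟨b, rfl⟩ := (Submodule.mem_span_range_iff_exists_fun ℝ).mp hu_span
  have ht : (1 - Fintype.card ι * ε) * ∑ i, b i ^ 2 ≤ 1 := by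
    have := (abs_le.mp (abs_norm_sum_smul_sq_sub_le hv hε b)).1
    rw [hu] at this
    linarith
  rw [le_div_iff₀ (sub_pos.mpr hδ)]
  calc |L (∑ i, b i • v i) (∑ i, b i • v i)| * (1 - Fintype.card ι * ε)
      ≤ (∑ i, b i ^ 2) * A * (1 - Fintype.card ι * ε) := by
        gcongr
        exact abs_apply_sum_smul_le_sum_sq_mul_sSup L hbdd b
    _ = ((1 - Fintype.card ι * ε) * ∑ i, b i ^ 2) * A := by ring
    _ ≤ A := mul_le_of_le_one_left hA ht

lemma abs_sSup_frameQuadValues_sub_le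
    (hv : ∀ i j, |inner ℝ (v i) (v j) - (if i = j then 1 else 0)| ≤ ε) (hε : 0 ≤ ε)
    (hδ : Fintype.card ι * ε < 1) (hcard : Fintype.card ι = Module.finrank ℝ V) :
    |sSup (frameQuadValues L v) - sSup (unitQuadValues L)| ≤
      Fintype.card ι * ε * sSup (unitQuadValues L) := by
  have hupper := sSup_frameQuadValues_le L hv hε
  have hlower := sSup_unitQuadValues_le L hv hε hδ hcard
  rw [abs_sub_le_iff]
  constructor <;> linarith

end Comparison

/-- There is a constant `C > 0` depending only on `n` with the following property. For every
`n`-dimensional real inner product space `V`, every symmetric bilinear form `L : V × V → ℝ`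
with best bound `‖L‖_B = sup_{‖u‖=1} |L(u,u)|`, every `ε ∈ (0, 1/(2n))` and every family
`v₁, …, vₙ ∈ V` with `|⟨vᵢ, vⱼ⟩ − δᵢⱼ| ≤ ε`, one has
`| sup_{Σ aᵢ² = 1} |L(Σ aᵢ vᵢ, Σ aᵢ vᵢ)| − ‖L‖_B | ≤ C ‖L‖_B ε`. -/
theorem stmt10 (n : ℕ) : ∃ C : ℝ, 0 < C ∧
    ∀ (V : Type u) [NormedAddCommGroup V] [InnerProductSpace ℝ V],
      Module.finrank ℝ V = n →
      ∀ L : V →ₗ[ℝ] V →ₗ[ℝ] ℝ, (∀ u w : V, L u w = L w u) →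
      ∀ ε ∈ Set.Ioo (0:ℝ) (1 / (2 * n)),
      ∀ v : Fin n → V,
        (∀ i j : Fin n, |(inner ℝ (v i) (v j) : ℝ) - (if i = j then 1 else 0)| ≤ ε) →
        |sSup {x : ℝ | ∃ a : Fin n → ℝ, (∑ i, (a i) ^ 2) = 1 ∧
              x = |L (∑ i, a i • v i) (∑ i, a i • v i)|} -
            sSup {x : ℝ | ∃ u : V, ‖u‖ = 1 ∧ x = |L u u|}| ≤
          C * sSup {x : ℝ | ∃ u : V, ‖u‖ = 1 ∧ x = |L u u|} * ε := by
  refine ⟨n + 1, by positivity, ?_⟩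
  intro V _ _ hdim L _ ε ⟨hε, hεn⟩ v hv
  have hn : 0 < n := Nat.pos_of_ne_zero fun h => by simp [h] at hεn; linarith
  have : FiniteDimensional ℝ V := Module.finite_of_finrank_pos (hdim ▸ hn)
  have hδ : Fintype.card (Fin n) * ε < 1 := by
    rw [lt_div_iff₀ (by positivity)] at hεn
    rw [Fintype.card_fin]
    linarith
  calc _ ≤ Fintype.card (Fin n) * ε * sSup (unitQuadValues L) :=
        abs_sSup_frameQuadValues_sub_le L hv hε.le hδ (by rw [Fintype.card_fin, hdim])
    _ ≤ (n + 1) * sSup (unitQuadValues L) * ε := by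
        rw [Fintype.card_fin, mul_right_comm]
        gcongr
        · exact sSup_unitQuadValues_nonneg L
        · linarith
end

section
/- Let Ω ⊆ ℝⁿ be a bounded open set, let f = (f₁, …, f_{k+1}) : Ω → 𝕊ᵏ be a Lipschitz map, and let φ = (φ₁, …, φ_{k+1}) : Ω → ℝ^{k+1} be a Lipschitz map with compact support contained in Ω. Then for all t ∈ ℝ with |t| sufficiently small, ‖f(x) + tφ(x)‖ > 0 for all x ∈ Ω, so f_t := (f + tφ)/‖f + tφ‖ is a well-defined Lipschitz map from Ω to 𝕊ᵏ; moreover the function t ↦ E(f_t) is differentiable at t = 0 with d/dt|_{t=0} E(f_t) = Σ_{i=1}^{k+1} ∫_Ω ⟨∇f_i(x), ∇(φ_i − f_i (f·φ))(x)⟩ dℒⁿ(x), where f·φ := Σ_{j=1}^{k+1} f_j φ_j. -/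
open Metric Set MeasureTheory Filter Topology
open scoped NNReal

/-- The Dirichlet energy of a map `g : Ω → ℝ^{k+1}`:
`E(g) = (1/2) ∫_Ω Σᵢ ‖∇gᵢ(x)‖² dℒⁿ(x)`. -/
noncomputable def dirichletEnergy {n k : ℕ} (Ω : Set (EuclideanSpace ℝ (Fin n)))
    (g : EuclideanSpace ℝ (Fin n) → EuclideanSpace ℝ (Fin (k + 1))) : ℝ :=
  (1 / 2) * ∫ x in Ω, ∑ i : Fin (k + 1), ‖gradient (fun y => g y i) x‖ ^ 2 ∂volume

/-!
At a point where `f` and `φ` are differentiable, the gradients of the components of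
`(f + tφ)/‖f + tφ‖` are explicit functions (`normalizeGrad`) of `t` and of the values of `f`, `φ`,
`∇fⱼ`, `∇φⱼ` at that point. At `t = 0` they reduce to `∇fᵢ`, because `‖f‖ = 1` forces
`Σⱼ fⱼ ∇fⱼ = 0`, and their `t`-derivative there is `∇(φᵢ - fᵢ (f·φ))`. By Rademacher's theorem this
holds almost everywhere on `Ω`. The data at a point range over a compact set on which the energy
density of the normalized map is `C¹`, so the integrands are Lipschitz in `t` with one constant,
and differentiation under the integral sign gives the formula.
-/

open InnerProductSpace
open scoped RealInnerProductSpace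

section GradientCalculus

variable {H : Type*} [NormedAddCommGroup H] [InnerProductSpace ℝ H] [CompleteSpace H]
  {f g : H → ℝ} {f' g' x : H}

theorem HasGradientAt.add (hf : HasGradientAt f f' x) (hg : HasGradientAt g g' x) :
    HasGradientAt (fun y => f y + g y) (f' + g') x := by
  rw [hasGradientAt_iff_hasFDerivAt] at *
  rw [map_add]
  exact hf.add hg

theorem HasGradientAt.sub (hf : HasGradientAt f f' x) (hg : HasGradientAt g g' x) :
    HasGradientAt (fun y => f y - g y) (f' - g') x := by
  rw [hasGradientAt_iff_hasFDerivAt] at *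
  rw [map_sub]
  exact hf.sub hg

theorem HasGradientAt.mul (hf : HasGradientAt f f' x) (hg : HasGradientAt g g' x) :
    HasGradientAt (fun y => f y * g y) (f x • g' + g x • f') x := by
  rw [hasGradientAt_iff_hasFDerivAt] at *
  simp only [map_add, map_smul]
  exact hf.mul hg

theorem HasGradientAt.const_mul (c : ℝ) (hf : HasGradientAt f f' x) :
    HasGradientAt (fun y => c * f y) (c • f') x := by
  rw [hasGradientAt_iff_hasFDerivAt] at *
  rw [map_smul]
  exact hf.const_mul c

theorem HasGradientAt.fun_sum {ι : Type*} {s : Finset ι} {F : ι → H → ℝ} {F' : ι → H}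
    (hF : ∀ i ∈ s, HasGradientAt (F i) (F' i) x) :
    HasGradientAt (fun y => ∑ i ∈ s, F i y) (∑ i ∈ s, F' i) x := by
  simp only [hasGradientAt_iff_hasFDerivAt, map_sum] at *
  exact HasFDerivAt.fun_sum hF

theorem HasDerivAt.comp_hasGradientAt {h : ℝ → ℝ} {h' : ℝ} (hh : HasDerivAt h h' (f x))
    (hf : HasGradientAt f f' x) : HasGradientAt (fun y => h (f y)) (h' • f') x := by
  rw [hasGradientAt_iff_hasFDerivAt] at *
  rw [map_smul]
  exact hh.comp_hasFDerivAt x hf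

end GradientCalculus

theorem hasDerivAt_inv_sqrt {s : ℝ} (hs : 0 < s) :
    HasDerivAt (fun r => (√r)⁻¹) (-(1 / 2) * (√s)⁻¹ ^ 3) s := by
  refine ((Real.hasDerivAt_sqrt hs.ne').inv (Real.sqrt_ne_zero'.2 hs)).congr_deriv ?_
  have : √s ≠ 0 := Real.sqrt_ne_zero'.2 hs
  field_simp

section Normalize

variable {V : Type*} [AddCommGroup V] [Module ℝ V] {m : ℕ}

/-- The gradient of the `i`-th component of `g / ‖g‖` at a point where `g = w` and `∇gⱼ = cⱼ`. -/
noncomputable def normalizeGrad (w : EuclideanSpace ℝ (Fin m)) (c : Fin m → V) (i : Fin m) : V :=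
  ‖w‖⁻¹ • c i - (‖w‖⁻¹ ^ 3 * w i) • ∑ j, w j • c j

/-- The gradient of `φᵢ - fᵢ (f·φ)` at a point where `f = u`, `φ = v`, `∇fⱼ = aⱼ`, `∇φⱼ = bⱼ`. -/
noncomputable def tangentialGrad (u v : EuclideanSpace ℝ (Fin m)) (a b : Fin m → V) (i : Fin m) :
    V :=
  b i - (∑ j, u j * v j) • a i - u i • ∑ j, (u j • b j + v j • a j)

theorem normalizeGrad_of_norm_eq_one {u : EuclideanSpace ℝ (Fin m)} {a : Fin m → V} (hu : ‖u‖ = 1)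
    (hua : ∑ j, u j • a j = 0) (i : Fin m) : normalizeGrad u a i = a i := by
  simp [normalizeGrad, hu, hua]

variable {H : Type*} [NormedAddCommGroup H] [InnerProductSpace ℝ H] [CompleteSpace H]
  {g : H → EuclideanSpace ℝ (Fin m)} {c : Fin m → H} {x : H}

theorem hasGradientAt_norm_sq_of_hasGradientAt_apply
    (hg : ∀ j, HasGradientAt (fun y => g y j) (c j) x) :
    HasGradientAt (fun y => ‖g y‖ ^ 2) (∑ j, (2 * g x j) • c j) x := by
  simp only [EuclideanSpace.real_norm_sq_eq]
  exact HasGradientAt.fun_sum fun j _ => by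
    simpa using (hasDerivAt_pow 2 _).comp_hasGradientAt (hg j)

theorem hasGradientAt_normalize_apply (hg : ∀ j, HasGradientAt (fun y => g y j) (c j) x)
    (hx : g x ≠ 0) (i : Fin m) :
    HasGradientAt (fun y => NormedSpace.normalize (g y) i) (normalizeGrad (g x) c i) x := by
  have hinv := (hasDerivAt_inv_sqrt (by positivity : 0 < ‖g x‖ ^ 2)).comp_hasGradientAt
    (f := fun y => ‖g y‖ ^ 2) (hasGradientAt_norm_sq_of_hasGradientAt_apply hg)
  simp only [Real.sqrt_sq (norm_nonneg _)] at hinv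
  convert hinv.mul (hg i) using 1
  · funext y
    simp [NormedSpace.normalize]
  · simp only [normalizeGrad, Finset.smul_sum, smul_smul]
    rw [sub_eq_add_neg, ← Finset.sum_neg_distrib]
    congr 1
    refine Finset.sum_congr rfl fun j _ => ?_
    rw [← neg_smul]
    ring_nf

theorem sum_smul_eq_zero_of_norm_eq_one (hg : ∀ j, HasGradientAt (fun y => g y j) (c j) x)
    (h1 : ∀ᶠ y in 𝓝 x, ‖g y‖ = 1) : ∑ j, g x j • c j = 0 := by
  have hconst : HasGradientAt (fun y => ‖g y‖ ^ 2) 0 x :=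
    (hasGradientAt_const x (1 : ℝ)).congr_of_eventuallyEq (h1.mono fun y hy => by simp [hy])
  have h2 := (hasGradientAt_norm_sq_of_hasGradientAt_apply hg).unique hconst
  simp only [mul_smul, ← Finset.smul_sum] at h2
  exact (smul_eq_zero.1 h2).resolve_left two_ne_zero

theorem hasGradientAt_tangential_apply {f φ : H → EuclideanSpace ℝ (Fin m)} {a b : Fin m → H}
    (ha : ∀ j, HasGradientAt (fun y => f y j) (a j) x)
    (hb : ∀ j, HasGradientAt (fun y => φ y j) (b j) x) (i : Fin m) :
    HasGradientAt (fun y => φ y i - f y i * ∑ j, f y j * φ y j)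
      (tangentialGrad (f x) (φ x) a b i) x := by
  convert (hb i).sub ((ha i).mul (HasGradientAt.fun_sum (s := Finset.univ)
    fun j _ => (ha j).mul (hb j))) using 1
  rw [tangentialGrad, sub_sub, add_comm (f x i • _)]

end Normalize

section Line

variable {V : Type*} [NormedAddCommGroup V] [NormedSpace ℝ V] {m : ℕ}
  {u v : EuclideanSpace ℝ (Fin m)} {a b : Fin m → V}

theorem hasDerivAt_inv_norm_add_smul (hu : ‖u‖ = 1) :
    HasDerivAt (fun t : ℝ => ‖u + t • v‖⁻¹) (-∑ j, u j * v j) 0 := by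
  have hline : HasDerivAt (fun t : ℝ => u + t • v) v 0 := by
    simpa using ((hasDerivAt_id (0 : ℝ)).smul_const v).const_add u
  have h := (hasDerivAt_inv_sqrt (by simp [hu] : (0 : ℝ) < ‖u + (0 : ℝ) • v‖ ^ 2)).comp 0
    hline.norm_sq
  simp only [Function.comp_def, Real.sqrt_sq (norm_nonneg _)] at h
  refine h.congr_deriv ?_
  simp [hu, PiLp.inner_apply, mul_comm]

theorem hasDerivAt_normalizeGrad_add_smul (hu : ‖u‖ = 1) (hua : ∑ j, u j • a j = 0)
    (i : Fin m) :
    HasDerivAt (fun t : ℝ => normalizeGrad (u + t • v) (a + t • b) i)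
      (tangentialGrad u v a b i) 0 := by
  have hu' : ∀ j, HasDerivAt (fun t : ℝ => (u + t • v) j) (v j) 0 := fun j => by
    simpa using ((hasDerivAt_id (0 : ℝ)).mul_const (v j)).const_add (u j)
  have ha' : ∀ j, HasDerivAt (fun t : ℝ => (a + t • b) j) (b j) 0 := fun j => by
    simpa using ((hasDerivAt_id (0 : ℝ)).smul_const (b j)).const_add (a j)
  have hr := hasDerivAt_inv_norm_add_smul (v := v) hu
  have hS : HasDerivAt (fun t : ℝ => ∑ j, (u + t • v) j • (a + t • b) j)
      (∑ j, (u j • b j + v j • a j)) 0 :=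
    HasDerivAt.fun_sum fun j _ => ((hu' j).smul (ha' j)).congr_deriv (by simp)
  refine ((hr.smul (ha' i)).sub (((hr.pow 3).mul (hu' i)).smul hS)).congr_deriv ?_
  simp [tangentialGrad, hu, hua, sub_eq_add_neg]

end Line

section Energy

variable {V : Type*} [NormedAddCommGroup V] [InnerProductSpace ℝ V] {m : ℕ}
  {u v : EuclideanSpace ℝ (Fin m)} {a b : Fin m → V}

noncomputable def normalizeEnergy (w : EuclideanSpace ℝ (Fin m)) (c : Fin m → V) : ℝ :=
  ∑ i, ‖normalizeGrad w c i‖ ^ 2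

theorem hasDerivAt_normalizeEnergy_add_smul (hu : ‖u‖ = 1) (hua : ∑ j, u j • a j = 0) :
    HasDerivAt (fun t : ℝ => normalizeEnergy (u + t • v) (a + t • b))
      (2 * ∑ i, ⟪a i, tangentialGrad u v a b i⟫) 0 := by
  rw [Finset.mul_sum]
  refine HasDerivAt.fun_sum fun i _ => ?_
  refine (hasDerivAt_normalizeGrad_add_smul (v := v) (b := b) hu hua i).norm_sq.congr_deriv ?_
  simp [normalizeGrad_of_norm_eq_one hu hua]

theorem contDiffAt_normalizeEnergy {n : WithTop ℕ∞} {p : EuclideanSpace ℝ (Fin m) × (Fin m → V)}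
    (hp : p.1 ≠ 0) :
    ContDiffAt ℝ n (fun q : EuclideanSpace ℝ (Fin m) × (Fin m → V) => normalizeEnergy q.1 q.2)
      p := by
  have hnorm : ContDiffAt ℝ n (fun q : EuclideanSpace ℝ (Fin m) × (Fin m → V) => ‖q.1‖⁻¹) p :=
    (contDiffAt_fst.norm ℝ hp).inv (norm_ne_zero_iff.2 hp)
  unfold normalizeEnergy normalizeGrad
  exact ContDiffAt.sum fun i _ => ContDiffAt.norm_sq ℝ (by fun_prop)

end Energy

section Lipschitz

theorem LipschitzOnWith.isBounded_image {α β : Type*} [PseudoMetricSpace α]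
    [PseudoMetricSpace β] {f : α → β} {K : ℝ≥0} {s : Set α} (hf : LipschitzOnWith K f s)
    (hs : Bornology.IsBounded s) : Bornology.IsBounded (f '' s) := by
  obtain ⟨C, hC⟩ := isBounded_iff.1 hs
  exact isBounded_image_iff.2 ⟨K * C, fun x hx y hy =>
    (hf.dist_le_mul x hx y hy).trans (by gcongr; exact hC hx hy)⟩

theorem exists_lipschitzOnWith_of_contDiffAt {P F : Type*} [NormedAddCommGroup P]
    [NormedSpace ℝ P] [NormedAddCommGroup F] [NormedSpace ℝ F] {ψ : P → F} {K : Set P}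
    (hK : IsCompact K) (hψ : ∀ p ∈ K, ContDiffAt ℝ 1 ψ p) : ∃ C, LipschitzOnWith C ψ K :=
  LocallyLipschitzOn.exists_lipschitzOnWith_of_compact hK fun p hp =>
    let ⟨C, t, ht, hC⟩ := (hψ p hp).exists_lipschitzOnWith
    ⟨C, t, mem_nhdsWithin_of_mem_nhds ht, hC⟩

theorem lipschitzWith_add_smul {V : Type*} [SeminormedAddCommGroup V] [NormedSpace ℝ V]
    (p q : V) : LipschitzWith ‖q‖₊ (fun t : ℝ => p + t • q) :=
  LipschitzWith.of_dist_le_mul fun t t' => by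
    rw [dist_add_left, dist_eq_norm, ← sub_smul, norm_smul, ← dist_eq_norm, coe_nnnorm, mul_comm]

variable {V : Type*} [NormedAddCommGroup V] [NormedSpace ℝ V]

theorem norm_normalize_sub_normalize_le {v w : V} {r : ℝ} (hr : 0 < r) (hv : r ≤ ‖v‖)
    (hw : r ≤ ‖w‖) : ‖NormedSpace.normalize v - NormedSpace.normalize w‖ ≤ 2 / r * ‖v - w‖ := by
  have hv0 : 0 < ‖v‖ := hr.trans_le hv
  have hw0 : 0 < ‖w‖ := hr.trans_le hw
  have hsplit : NormedSpace.normalize v - NormedSpace.normalize w =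
      ‖v‖⁻¹ • (v - w) + (‖v‖⁻¹ - ‖w‖⁻¹) • w := by
    simp only [NormedSpace.normalize]
    module
  have h₁ : ‖‖v‖⁻¹ • (v - w)‖ ≤ ‖v - w‖ / r := by
    rw [norm_smul, norm_inv, norm_norm, inv_mul_eq_div]
    exact div_le_div_of_nonneg_left (norm_nonneg _) hr hv
  have h₂ : ‖(‖v‖⁻¹ - ‖w‖⁻¹) • w‖ ≤ ‖v - w‖ / r := by
    rw [norm_smul, inv_sub_inv hv0.ne' hw0.ne', Real.norm_eq_abs, abs_div,
      abs_of_pos (mul_pos hv0 hw0), div_mul_eq_mul_div, mul_div_mul_right _ _ hw0.ne',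
      abs_sub_comm]
    exact div_le_div₀ (norm_nonneg _) (abs_norm_sub_norm_le v w) hr hv
  calc ‖NormedSpace.normalize v - NormedSpace.normalize w‖ ≤ ‖v - w‖ / r + ‖v - w‖ / r :=
        hsplit ▸ (norm_add_le _ _).trans (add_le_add h₁ h₂)
    _ = 2 / r * ‖v - w‖ := by ring

theorem LipschitzOnWith.normalize {α : Type*} [PseudoMetricSpace α] {g : α → V} {K : ℝ≥0}
    {s : Set α} {r : ℝ≥0} (hg : LipschitzOnWith K g s) (hr : 0 < r)
    (hgr : ∀ x ∈ s, r ≤ ‖g x‖) :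
    LipschitzOnWith (2 / r * K) (fun x => NormedSpace.normalize (g x)) s := by
  refine LipschitzOnWith.of_dist_le_mul fun x hx y hy => ?_
  rw [dist_eq_norm]
  calc ‖NormedSpace.normalize (g x) - NormedSpace.normalize (g y)‖ ≤ 2 / r * ‖g x - g y‖ :=
        norm_normalize_sub_normalize_le hr (hgr x hx) (hgr y hy)
    _ ≤ 2 / r * (K * dist x y) := by
        rw [← dist_eq_norm]
        gcongr
        exact hg.dist_le_mul x hx y hy
    _ = ↑(2 / r * K) * dist x y := by push_cast; ring

theorem half_le_norm_add_smul {u v : V} {M t : ℝ} (hu : ‖u‖ = 1) (hv : ‖v‖ ≤ M) (hM : 0 < M)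
    (ht : |t| ≤ (2 * M)⁻¹) : 1 / 2 ≤ ‖u + t • v‖ := by
  have htv : ‖t • v‖ ≤ 1 / 2 := by
    rw [norm_smul, Real.norm_eq_abs]
    calc |t| * ‖v‖ ≤ (2 * M)⁻¹ * M := by gcongr
      _ = 1 / 2 := by field_simp
  have h := norm_sub_le (u + t • v) (t • v)
  rw [add_sub_cancel_right] at h
  linarith

end Lipschitz

section Variation

variable {H : Type*} [NormedAddCommGroup H] [InnerProductSpace ℝ H] [CompleteSpace H] {m : ℕ}

noncomputable def componentGrad (g : H → EuclideanSpace ℝ (Fin m)) (x : H) (j : Fin m) : H :=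
  gradient (fun y => g y j) x

noncomputable def energyDensity (g : H → EuclideanSpace ℝ (Fin m)) (x : H) : ℝ :=
  ∑ i, ‖componentGrad g x i‖ ^ 2

theorem measurable_gradient [MeasurableSpace H] [BorelSpace H] (g : H → ℝ) :
    Measurable (gradient g) :=
  (toDual ℝ H).symm.continuous.measurable.comp (measurable_fderiv ℝ g)

theorem measurable_energyDensity [MeasurableSpace H] [BorelSpace H]
    (g : H → EuclideanSpace ℝ (Fin m)) : Measurable (energyDensity g) :=
  Finset.measurable_fun_sum _ fun _ _ => (measurable_gradient _).norm.pow_const 2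

variable {f φ : H → EuclideanSpace ℝ (Fin m)} {a b : Fin m → H} {x : H}

theorem energyDensity_normalize_add_smul (ha : ∀ j, HasGradientAt (fun y => f y j) (a j) x)
    (hb : ∀ j, HasGradientAt (fun y => φ y j) (b j) x) {t : ℝ} (ht : f x + t • φ x ≠ 0) :
    energyDensity (fun y => NormedSpace.normalize (f y + t • φ y)) x =
      normalizeEnergy (f x + t • φ x) (a + t • b) := by
  have hg : ∀ j, HasGradientAt (fun y => (f y + t • φ y) j) ((a + t • b) j) x := fun j => by
    simpa using (ha j).add ((hb j).const_mul t)
  simp only [energyDensity, normalizeEnergy, componentGrad,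
    fun i => (hasGradientAt_normalize_apply hg ht i).gradient]

theorem hasDerivAt_energyDensity_normalize_add_smul
    (ha : ∀ j, HasGradientAt (fun y => f y j) (a j) x)
    (hb : ∀ j, HasGradientAt (fun y => φ y j) (b j) x) (hf : ∀ᶠ y in 𝓝 x, ‖f y‖ = 1) :
    HasDerivAt (fun t : ℝ => energyDensity (fun y => NormedSpace.normalize (f y + t • φ y)) x)
      (2 * ∑ i, ⟪a i, gradient (fun y => φ y i - f y i * ∑ j, f y j * φ y j) x⟫) 0 := by
  have hfx : ‖f x‖ = 1 := hf.self_of_nhds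
  have hne : ∀ᶠ t : ℝ in 𝓝 0, f x + t • φ x ≠ 0 :=
    (continuous_const.add (continuous_id.smul continuous_const)).continuousAt.eventually_ne
      (by simp [← norm_ne_zero_iff, hfx])
  simp only [fun i => (hasGradientAt_tangential_apply ha hb i).gradient]
  exact (hasDerivAt_normalizeEnergy_add_smul hfx (sum_smul_eq_zero_of_norm_eq_one ha hf))
    |>.congr_of_eventuallyEq (hne.mono fun t ht => energyDensity_normalize_add_smul ha hb ht)

end Variation

section Integrability

variable {H : Type*} [NormedAddCommGroup H] [InnerProductSpace ℝ H] [FiniteDimensional ℝ H]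
  [MeasurableSpace H] [BorelSpace H] {μ : Measure H} {m : ℕ} {s : Set H}

theorem LipschitzOnWith.ae_hasGradientAt_apply [μ.IsAddHaarMeasure]
    {g : H → EuclideanSpace ℝ (Fin m)} {K : ℝ≥0} (hg : LipschitzOnWith K g s) (hs : IsOpen s) :
    ∀ᵐ x ∂μ.restrict s, x ∈ s ∧
      (∀ j, HasGradientAt (fun y => g y j) (componentGrad g x j) x) ∧ ‖componentGrad g x‖ ≤ K := by
  filter_upwards [hg.ae_differentiableWithinAt (μ := μ) hs.measurableSet,
    ae_restrict_mem hs.measurableSet] with x hdx hx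
  have hd := hdx.differentiableAt (hs.mem_nhds hx)
  have hj : ∀ j, HasGradientAt (fun y => g y j) (componentGrad g x j) x := fun j =>
    ((EuclideanSpace.proj j : EuclideanSpace ℝ (Fin m) →L[ℝ] ℝ).differentiableAt.comp x
      hd).hasGradientAt
  refine ⟨hx, hj, (pi_norm_le_iff_of_nonneg K.coe_nonneg).2 fun j => ?_⟩
  have hLip : LipschitzOnWith K (fun y => g y j) s := LipschitzOnWith.of_dist_le_mul
    fun y hy z hz => (PiLp.dist_apply_le _ _ j).trans (hg.dist_le_mul y hy z hz)
  have h := (hj j).hasFDerivAt.le_of_lipschitzOn (hs.mem_nhds hx) hLip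
  rwa [LinearIsometryEquiv.norm_map] at h

theorem integrable_of_ae_eq_comp_of_isCompact {α P : Type*} [MeasurableSpace α] {ν : Measure α}
    [IsFiniteMeasure ν] [TopologicalSpace P] {g : α → ℝ} {θ : P → ℝ} {p : α → P} {K : Set P}
    (hK : IsCompact K) (hθ : ContinuousOn θ K) (hg : AEStronglyMeasurable g ν)
    (hgp : ∀ᵐ x ∂ν, p x ∈ K ∧ g x = θ (p x)) : Integrable g ν := by
  obtain ⟨C, hC⟩ := hK.exists_bound_of_continuousOn hθ
  refine Integrable.of_bound hg C ?_
  filter_upwards [hgp] with x ⟨hx, hgx⟩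
  exact hgx ▸ hC _ hx

theorem integrable_energyDensity [μ.IsAddHaarMeasure] [IsFiniteMeasure (μ.restrict s)]
    {g : H → EuclideanSpace ℝ (Fin m)} {K : ℝ≥0} (hg : LipschitzOnWith K g s) (hs : IsOpen s) :
    Integrable (energyDensity g) (μ.restrict s) := by
  refine integrable_of_ae_eq_comp_of_isCompact (p := componentGrad g) (isCompact_closedBall 0 K)
    (θ := fun c => ∑ i, ‖c i‖ ^ 2) (by fun_prop)
    (measurable_energyDensity g).aestronglyMeasurable ?_
  filter_upwards [hg.ae_hasGradientAt_apply hs] with x ⟨_, _, hK⟩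
  exact ⟨mem_closedBall_zero_iff.2 hK, rfl⟩

end Integrability

section FirstVariation

theorem exists_lipschitzOnWith_normalize_add_smul {α V : Type*} [PseudoMetricSpace α]
    [NormedAddCommGroup V] [NormedSpace ℝ V] {f φ : α → V} {s : Set α} {Kf Kφ : ℝ≥0} {M t : ℝ}
    (hf : LipschitzOnWith Kf f s) (hsphere : ∀ x ∈ s, ‖f x‖ = 1) (hφ : LipschitzOnWith Kφ φ s)
    (hM0 : 0 < M) (hM : ∀ x ∈ s, ‖φ x‖ ≤ M) (ht : |t| ≤ (2 * M)⁻¹) :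
    ∃ K, LipschitzOnWith K (fun x => NormedSpace.normalize (f x + t • φ x)) s :=
  ⟨_, (hf.add ((lipschitzWith_smul t).comp_lipschitzOnWith hφ)).normalize (r := 1 / 2)
    (by norm_num) fun x hx => by
      simpa using half_le_norm_add_smul (hsphere x hx) (hM x hx) hM0 ht⟩

theorem exists_lipschitzOnWith_normalizeEnergy_add_smul {V : Type*} [NormedAddCommGroup V]
    [InnerProductSpace ℝ V] [FiniteDimensional ℝ V] {m : ℕ} {r : ℝ} (hr : 0 < r) (R : ℝ) :
    ∃ C : ℝ≥0, ∀ (p q : EuclideanSpace ℝ (Fin m) × (Fin m → V)) (s : Set ℝ),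
      (∀ t ∈ s, r ≤ ‖p.1 + t • q.1‖ ∧ ‖p + t • q‖ ≤ R) →
      LipschitzOnWith (C * ‖q‖₊) (fun t => normalizeEnergy (p.1 + t • q.1) (p.2 + t • q.2)) s := by
  have hK : IsCompact
      ({p : EuclideanSpace ℝ (Fin m) × (Fin m → V) | r ≤ ‖p.1‖} ∩ closedBall 0 R) :=
    (isCompact_closedBall 0 R).inter_left
      (isClosed_le continuous_const (continuous_norm.comp continuous_fst))
  obtain ⟨C, hC⟩ := exists_lipschitzOnWith_of_contDiffAt hK fun p hp =>
    contDiffAt_normalizeEnergy (norm_pos_iff.1 (hr.trans_le hp.1))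
  refine ⟨C, fun p q s hs => ?_⟩
  exact (hC.comp (lipschitzWith_add_smul p q).lipschitzOnWith (s := s)
    fun t ht => ⟨(hs t ht).1, mem_closedBall_zero_iff.2 (hs t ht).2⟩ :)

variable {H : Type*} [NormedAddCommGroup H] [InnerProductSpace ℝ H] [FiniteDimensional ℝ H]
  [MeasurableSpace H] [BorelSpace H] {μ : Measure H} [μ.IsAddHaarMeasure] {m : ℕ} {s : Set H}
  {f φ : H → EuclideanSpace ℝ (Fin m)} {Kf Kφ : ℝ≥0}

theorem exists_ae_lipschitzOnWith_energyDensity_normalize_add_smul {M : ℝ} (hs : IsOpen s)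
    (hf : LipschitzOnWith Kf f s) (hsphere : ∀ x ∈ s, ‖f x‖ = 1) (hφ : LipschitzOnWith Kφ φ s)
    (hM0 : 0 < M) (hM : ∀ x ∈ s, ‖φ x‖ ≤ M) :
    ∃ C : ℝ≥0, ∀ᵐ x ∂μ.restrict s, LipschitzOnWith C
      (fun t : ℝ => energyDensity (fun y => NormedSpace.normalize (f y + t • φ y)) x)
      (ball 0 (2 * M)⁻¹) := by
  set δ := (2 * M)⁻¹
  set R₀ : ℝ := max 1 Kf
  set R₁ : ℝ := max M Kφ
  obtain ⟨C, hC⟩ := exists_lipschitzOnWith_normalizeEnergy_add_smul (V := H) (m := m)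
    (by norm_num : (0 : ℝ) < 1 / 2) (R₀ + δ * R₁)
  refine ⟨C * R₁.toNNReal, ?_⟩
  filter_upwards [hf.ae_hasGradientAt_apply hs, hφ.ae_hasGradientAt_apply hs]
    with x ⟨hx, ha, haK⟩ ⟨_, hb, hbK⟩
  set q₀ := (f x, componentGrad f x)
  set q₁ := (φ x, componentGrad φ x)
  have hq₀ : ‖q₀‖ ≤ R₀ :=
    norm_prod_le_iff.2 ⟨(hsphere x hx).le.trans (le_max_left _ _), haK.trans (le_max_right _ _)⟩
  have hq₁ : ‖q₁‖ ≤ R₁ :=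
    norm_prod_le_iff.2 ⟨(hM x hx).trans (le_max_left _ _), hbK.trans (le_max_right _ _)⟩
  have hlow : ∀ t ∈ ball (0 : ℝ) δ, 1 / 2 ≤ ‖f x + t • φ x‖ := fun t ht =>
    half_le_norm_add_smul (hsphere x hx) (hM x hx) hM0 (mem_ball_zero_iff.1 ht).le
  have hL := hC q₀ q₁ (ball 0 δ) fun t ht => ⟨hlow t ht, (norm_add_le _ _).trans <| by
    rw [norm_smul]
    gcongr
    exact (mem_ball_zero_iff.1 ht).le⟩
  have hne : ∀ t ∈ ball (0 : ℝ) δ, f x + t • φ x ≠ 0 := fun t ht =>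
    norm_pos_iff.1 (lt_of_lt_of_le (by norm_num) (hlow t ht))
  have hL' : LipschitzOnWith (C * ‖q₁‖₊)
      (fun t : ℝ => energyDensity (fun y => NormedSpace.normalize (f y + t • φ y)) x)
      (ball 0 δ) :=
    fun t ht t' ht' => by
      simp only [energyDensity_normalize_add_smul ha hb (hne t ht),
        energyDensity_normalize_add_smul ha hb (hne t' ht')]
      exact hL ht ht'
  refine hL'.weaken ?_
  gcongr
  exact (Real.le_toNNReal_iff_coe_le (by positivity)).2 hq₁

theorem integrable_inner_componentGrad_tangential [IsFiniteMeasure (μ.restrict s)]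
    (hs : IsOpen s) (hsb : Bornology.IsBounded s) (hf : LipschitzOnWith Kf f s)
    (hφ : LipschitzOnWith Kφ φ s) (i : Fin m) :
    Integrable (fun x => ⟪componentGrad f x i,
      gradient (fun y => φ y i - f y i * ∑ j, f y j * φ y j) x⟫) (μ.restrict s) := by
  obtain ⟨Bf, hBf⟩ := (hf.isBounded_image hsb).exists_norm_le
  obtain ⟨Bφ, hBφ⟩ := (hφ.isBounded_image hsb).exists_norm_le
  refine integrable_of_ae_eq_comp_of_isCompact
    (p := fun x => ((f x, componentGrad f x), (φ x, componentGrad φ x)))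
    ((isCompact_closedBall 0 (max Bf Kf)).prod (isCompact_closedBall 0 (max Bφ Kφ)))
    (θ := fun P => ⟪P.1.2 i, tangentialGrad P.1.1 P.2.1 P.1.2 P.2.2 i⟫)
    (by unfold tangentialGrad; fun_prop)
    ((measurable_gradient _).inner (measurable_gradient _)).aestronglyMeasurable ?_
  filter_upwards [hf.ae_hasGradientAt_apply hs, hφ.ae_hasGradientAt_apply hs]
    with x ⟨hx, ha, haK⟩ ⟨_, hb, hbK⟩
  refine ⟨⟨mem_closedBall_zero_iff.2 (norm_prod_le_iff.2 ⟨?_, ?_⟩),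
    mem_closedBall_zero_iff.2 (norm_prod_le_iff.2 ⟨?_, ?_⟩)⟩,
    by rw [(hasGradientAt_tangential_apply ha hb i).gradient]⟩
  · exact (hBf _ (mem_image_of_mem f hx)).trans (le_max_left _ _)
  · exact haK.trans (le_max_right _ _)
  · exact (hBφ _ (mem_image_of_mem φ hx)).trans (le_max_left _ _)
  · exact hbK.trans (le_max_right _ _)

end FirstVariation

theorem hasDerivAt_dirichletEnergy_normalize_add_smul {n k : ℕ}
    {Ω : Set (EuclideanSpace ℝ (Fin n))} (hΩo : IsOpen Ω) (hΩb : Bornology.IsBounded Ω)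
    {f φ : EuclideanSpace ℝ (Fin n) → EuclideanSpace ℝ (Fin (k + 1))} {Kf Kφ : ℝ≥0}
    (hf : LipschitzOnWith Kf f Ω) (hsphere : ∀ x ∈ Ω, ‖f x‖ = 1) (hφ : LipschitzOnWith Kφ φ Ω) :
    HasDerivAt (fun t : ℝ => dirichletEnergy Ω (fun x => NormedSpace.normalize (f x + t • φ x)))
      (∑ i, ∫ x in Ω, ⟪gradient (fun y => f y i) x,
        gradient (fun y => φ y i - f y i * ∑ j, f y j * φ y j) x⟫) 0 := by
  have : IsFiniteMeasure (volume.restrict Ω) := isFiniteMeasure_restrict.2 hΩb.measure_lt_top.ne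
  obtain ⟨M, hM0, hM⟩ := (hφ.isBounded_image hΩb).exists_pos_norm_le
  replace hM : ∀ x ∈ Ω, ‖φ x‖ ≤ M := fun x hx => hM _ (mem_image_of_mem φ hx)
  obtain ⟨C, hC⟩ := exists_ae_lipschitzOnWith_energyDensity_normalize_add_smul (μ := volume)
    hΩo hf hsphere hφ hM0 hM
  obtain ⟨K₀, hK₀⟩ := exists_lipschitzOnWith_normalize_add_smul hf hsphere hφ hM0 hM
    (t := 0) (by rw [abs_zero]; positivity)
  have hderiv : ∀ᵐ x ∂volume.restrict Ω, HasDerivAt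
      (fun t : ℝ => energyDensity (fun y => NormedSpace.normalize (f y + t • φ y)) x)
      (2 * ∑ i, ⟪componentGrad f x i,
        gradient (fun y => φ y i - f y i * ∑ j, f y j * φ y j) x⟫) 0 := by
    filter_upwards [hf.ae_hasGradientAt_apply hΩo, hφ.ae_hasGradientAt_apply hΩo]
      with x ⟨hx, ha, _⟩ ⟨_, hb, _⟩
    exact hasDerivAt_energyDensity_normalize_add_smul ha hb
      (eventually_of_mem (hΩo.mem_nhds hx) hsphere)
  have hT : AEStronglyMeasurable (fun x => 2 * ∑ i, ⟪componentGrad f x i,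
        gradient (fun y => φ y i - f y i * ∑ j, f y j * φ y j) x⟫) (volume.restrict Ω) :=
    (Finset.aestronglyMeasurable_fun_sum _ fun i _ =>
      ((measurable_gradient _).inner (measurable_gradient _)).aestronglyMeasurable).const_mul 2
  have hmeas : ∀ t : ℝ, AEStronglyMeasurable
      (fun x => energyDensity (fun y => NormedSpace.normalize (f y + t • φ y)) x)
      (volume.restrict Ω) := fun t => (measurable_energyDensity _).aestronglyMeasurable
  have h := (hasDerivAt_integral_of_dominated_loc_of_lip
    (ball_mem_nhds 0 (by positivity : (0 : ℝ) < (2 * M)⁻¹)) (Eventually.of_forall hmeas)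
    (integrable_energyDensity hK₀ hΩo) hT (hC.mono fun x hx => by rwa [Real.nnabs_coe])
    (integrable_const _) hderiv).2
  refine (h.const_mul (1 / 2)).congr_deriv ?_
  rw [integral_const_mul, integral_finsetSum _ fun i _ =>
    integrable_inner_componentGrad_tangential hΩo hΩb hf hφ i]
  simp only [componentGrad]
  ring

theorem stmt12_general (n k : ℕ) (Ω : Set (EuclideanSpace ℝ (Fin n)))
    (hΩo : IsOpen Ω) (hΩb : Bornology.IsBounded Ω)
    (f φ : EuclideanSpace ℝ (Fin n) → EuclideanSpace ℝ (Fin (k + 1)))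
    (Kf Kφ : ℝ≥0) (hf : LipschitzOnWith Kf f Ω)
    (hsphere : ∀ x ∈ Ω, ‖f x‖ = 1)
    (hφ : LipschitzOnWith Kφ φ Ω) :
    ∃ δ > (0:ℝ),
      (∀ t : ℝ, |t| < δ →
        (∀ x ∈ Ω, 0 < ‖f x + t • φ x‖) ∧
        (∃ K : ℝ≥0, LipschitzOnWith K
          (fun x => ‖f x + t • φ x‖⁻¹ • (f x + t • φ x)) Ω) ∧
        (∀ x ∈ Ω, ‖(‖f x + t • φ x‖⁻¹ • (f x + t • φ x))‖ = 1)) ∧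
      HasDerivAt
        (fun t : ℝ => dirichletEnergy Ω (fun x => ‖f x + t • φ x‖⁻¹ • (f x + t • φ x)))
        (∑ i : Fin (k + 1), ∫ x in Ω,
          (inner ℝ (gradient (fun y => f y i) x)
            (gradient (fun y => φ y i -
              f y i * (∑ j : Fin (k + 1), f y j * φ y j)) x) : ℝ) ∂volume)
        0 := by
  obtain ⟨M, hM0, hM⟩ := (hφ.isBounded_image hΩb).exists_pos_norm_le
  replace hM : ∀ x ∈ Ω, ‖φ x‖ ≤ M := fun x hx => hM _ (mem_image_of_mem φ hx)
  refine ⟨(2 * M)⁻¹, by positivity, fun t ht => ?_,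
    hasDerivAt_dirichletEnergy_normalize_add_smul hΩo hΩb hf hsphere hφ⟩
  have hpos : ∀ x ∈ Ω, 0 < ‖f x + t • φ x‖ := fun x hx =>
    lt_of_lt_of_le (by norm_num) (half_le_norm_add_smul (hsphere x hx) (hM x hx) hM0 ht.le)
  exact ⟨hpos, exists_lipschitzOnWith_normalize_add_smul hf hsphere hφ hM0 hM ht.le,
    fun x hx => NormedSpace.norm_normalize_eq_one_iff.2 (norm_pos_iff.1 (hpos x hx))⟩

/-- Let `Ω ⊆ ℝⁿ` be a bounded open set, `f : Ω → 𝕊ᵏ` a Lipschitz map, and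
`φ : Ω → ℝ^{k+1}` a Lipschitz map with compact support contained in `Ω`. Then for all
sufficiently small `t`, `‖f + tφ‖ > 0` on `Ω`, so `f_t := (f + tφ)/‖f + tφ‖` is a
well-defined Lipschitz map from `Ω` to `𝕊ᵏ`; moreover `t ↦ E(f_t)` is differentiable at
`t = 0` with derivative `Σᵢ ∫_Ω ⟨∇fᵢ, ∇(φᵢ − fᵢ (f·φ))⟩ dℒⁿ`. -/
theorem stmt12 (n k : ℕ) (Ω : Set (EuclideanSpace ℝ (Fin n)))
    (hΩo : IsOpen Ω) (hΩb : Bornology.IsBounded Ω)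
    (f φ : EuclideanSpace ℝ (Fin n) → EuclideanSpace ℝ (Fin (k + 1)))
    (Kf Kφ : ℝ≥0) (hf : LipschitzOnWith Kf f Ω)
    (hsphere : ∀ x ∈ Ω, ‖f x‖ = 1)
    (hφ : LipschitzOnWith Kφ φ Ω)
    (hsupp : tsupport φ ⊆ Ω) (hsuppc : IsCompact (tsupport φ)) :
    ∃ δ > (0:ℝ),
      (∀ t : ℝ, |t| < δ →
        (∀ x ∈ Ω, 0 < ‖f x + t • φ x‖) ∧
        (∃ K : ℝ≥0, LipschitzOnWith K
          (fun x => ‖f x + t • φ x‖⁻¹ • (f x + t • φ x)) Ω) ∧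
        (∀ x ∈ Ω, ‖(‖f x + t • φ x‖⁻¹ • (f x + t • φ x))‖ = 1)) ∧
      HasDerivAt
        (fun t : ℝ => dirichletEnergy Ω (fun x => ‖f x + t • φ x‖⁻¹ • (f x + t • φ x)))
        (∑ i : Fin (k + 1), ∫ x in Ω,
          (inner ℝ (gradient (fun y => f y i) x)
            (gradient (fun y => φ y i -
              f y i * (∑ j : Fin (k + 1), f y j * φ y j)) x) : ℝ) ∂volume)
        0 :=
  stmt12_general n k Ω hΩo hΩb f φ Kf Kφ hf hsphere hφ
end
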